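/- arXiv:1206.4931 — 5 statements merged into one kernel-verified Lean document; each statement's English description precedes it below -/
import Mathlib

section
/- Reduction property of the Izergin determinant: if one appends the pair (z-c, z) to the argument lists, then K_{n+1}(x₁,...,xₙ, z-c | y₁,...,yₙ, z) = - K_n(x₁,...,xₙ | y₁,...,yₙ), whenever all quantities are defined. -/
open Finset Filter Topology

noncomputable def gf (c x y : ℂ) : ℂ := c / (x - y)
noncomputable def ff (c x y : ℂ) : ℂ := (x - y + c) / (x - y)
noncomputable def hf (c x y : ℂ) : ℂ := (x - y + c) / c
noncomputable def tf (c x y : ℂ) : ℂ := c ^ 2 / ((x - y) * (x - y + c))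

/-- The Izergin determinant `K_n(x|y) = Δ'_n(x) Δ_n(y) ∏_{j,k} h(x_j,y_k) det[t(x_j,y_k)]`. -/
noncomputable def K (c : ℂ) (n : ℕ) (x y : Fin n → ℂ) : ℂ :=
  (∏ j : Fin n, ∏ k ∈ Finset.univ.filter (fun k => k < j), gf c (x j) (x k)) *
  (∏ j : Fin n, ∏ k ∈ Finset.univ.filter (fun k => j < k), gf c (y j) (y k)) *
  (∏ j : Fin n, ∏ k : Fin n, hf c (x j) (y k)) *
  Matrix.det (Matrix.of fun j k => tf c (x j) (y k))

/- Auxiliary set lemmas for splitting Fin (n+1) filtered products. -/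

lemma filt_lt_last (n : ℕ) :
    (Finset.univ.filter (fun k : Fin (n+1) => k < Fin.last n)) =
      Finset.univ.image Fin.castSucc := by
  ext k
  simp only [Finset.mem_filter, Finset.mem_univ, true_and, Finset.mem_image]
  constructor
  · intro hk
    exact ⟨k.castPred hk.ne, Fin.castSucc_castPred _ _⟩
  · rintro ⟨k', rfl⟩
    exact Fin.castSucc_lt_last k'

lemma filt_lt_castSucc {n : ℕ} (j : Fin n) :
    (Finset.univ.filter (fun k : Fin (n+1) => k < Fin.castSucc j)) =
      (Finset.univ.filter (fun k : Fin n => k < j)).image Fin.castSucc := by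
  ext k
  simp only [Finset.mem_filter, Finset.mem_univ, true_and, Finset.mem_image]
  constructor
  · intro hk
    have hkl : k < Fin.last n := hk.trans_le (Fin.le_last _)
    refine ⟨k.castPred hkl.ne, ?_, Fin.castSucc_castPred _ _⟩
    rw [← Fin.castSucc_lt_castSucc_iff, Fin.castSucc_castPred]
    exact hk
  · rintro ⟨k', hk', rfl⟩
    exact Fin.castSucc_lt_castSucc_iff.mpr hk'

lemma filt_gt_last (n : ℕ) :
    (Finset.univ.filter (fun k : Fin (n+1) => Fin.last n < k)) = ∅ := by
  apply Finset.filter_eq_empty_iff.mpr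
  intro k _
  exact not_lt.mpr (Fin.le_last k)

lemma filt_gt_castSucc {n : ℕ} (j : Fin n) :
    (Finset.univ.filter (fun k : Fin (n+1) => Fin.castSucc j < k)) =
      insert (Fin.last n)
        ((Finset.univ.filter (fun k : Fin n => j < k)).image Fin.castSucc) := by
  ext k
  simp only [Finset.mem_filter, Finset.mem_univ, true_and, Finset.mem_insert,
    Finset.mem_image]
  constructor
  · intro hk
    rcases eq_or_ne k (Fin.last n) with h | h
    · exact Or.inl h
    · refine Or.inr ⟨k.castPred h, ?_, Fin.castSucc_castPred _ _⟩
      rw [← Fin.castSucc_lt_castSucc_iff, Fin.castSucc_castPred]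
      exact hk
  · rintro (rfl | ⟨k', hk', rfl⟩)
    · exact Fin.castSucc_lt_last j
    · exact Fin.castSucc_lt_castSucc_iff.mpr hk'

lemma prod_filt_lt_last {n : ℕ} (f : Fin (n+1) → ℂ) :
    ∏ k ∈ Finset.univ.filter (fun k => k < Fin.last n), f k =
      ∏ k : Fin n, f (Fin.castSucc k) := by
  rw [filt_lt_last, Finset.prod_image (fun a _ b _ h => Fin.castSucc_injective n h)]

lemma prod_filt_lt_castSucc {n : ℕ} (f : Fin (n+1) → ℂ) (j : Fin n) :
    ∏ k ∈ Finset.univ.filter (fun k => k < Fin.castSucc j), f k =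
      ∏ k ∈ Finset.univ.filter (fun k => k < j), f (Fin.castSucc k) := by
  rw [filt_lt_castSucc, Finset.prod_image (fun a _ b _ h => Fin.castSucc_injective n h)]

lemma prod_filt_gt_castSucc {n : ℕ} (f : Fin (n+1) → ℂ) (j : Fin n) :
    ∏ k ∈ Finset.univ.filter (fun k => Fin.castSucc j < k), f k =
      f (Fin.last n) * ∏ k ∈ Finset.univ.filter (fun k => j < k), f (Fin.castSucc k) := by
  rw [filt_gt_castSucc, Finset.prod_insert, Finset.prod_image (fun a _ b _ h => Fin.castSucc_injective n h)]
  simp only [Finset.mem_image]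
  rintro ⟨k', _, hk'⟩
  exact (Fin.castSucc_lt_last k').ne hk'

/-- The limiting matrix: same as the Izergin `t`-matrix except that the last row has
been multiplied by `h(w, z)` and simplified so that it is regular at `w = z - c`. -/
noncomputable def Nmat (c z : ℂ) (n : ℕ) (x y : Fin n → ℂ) (w : ℂ) :
    Matrix (Fin (n+1)) (Fin (n+1)) ℂ :=
  Matrix.of fun j k =>
    Fin.lastCases
      (Fin.lastCases (c / (w - z))
        (fun k' => (w - z + c) * c / ((w - y k') * (w - y k' + c))) k)
      (fun j' => tf c (x j') ((Fin.snoc y z : Fin (n+1) → ℂ) k)) j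

/-- The prefactor: everything in `K_{n+1}` except `hf c w z` and the determinant. -/
noncomputable def Aw (c z : ℂ) (n : ℕ) (x y : Fin n → ℂ) (w : ℂ) : ℂ :=
  (∏ j : Fin (n+1), ∏ k ∈ Finset.univ.filter (fun k => k < j),
      gf c ((Fin.snoc x w : Fin (n+1) → ℂ) j) ((Fin.snoc x w : Fin (n+1) → ℂ) k)) *
  (∏ j : Fin (n+1), ∏ k ∈ Finset.univ.filter (fun k => j < k),
      gf c ((Fin.snoc y z : Fin (n+1) → ℂ) j) ((Fin.snoc y z : Fin (n+1) → ℂ) k)) *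
  ((∏ j : Fin n, ∏ k : Fin (n+1), hf c (x j) ((Fin.snoc y z : Fin (n+1) → ℂ) k)) *
    ∏ k : Fin n, hf c w (y k))


lemma div_c_mul_sq (c s B : ℂ) (hc : c ≠ 0) : s / c * (c ^ 2 / B) = s * c / B := by
  rcases eq_or_ne B 0 with rfl | hB
  · simp
  · field_simp

/-- Structural splitting of the prefactor, valid for every `w`. -/
lemma Aw_split (c z : ℂ) (n : ℕ) (x y : Fin n → ℂ) (w : ℂ) :
    Aw c z n x y w =
      ((∏ j : Fin n, ∏ k ∈ Finset.univ.filter (fun k => k < j), gf c (x j) (x k)) *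
        ∏ k : Fin n, gf c w (x k)) *
      ((∏ j : Fin n, gf c (y j) z) *
        (∏ j : Fin n, ∏ k ∈ Finset.univ.filter (fun k => j < k), gf c (y j) (y k))) *
      (((∏ j : Fin n, ∏ k : Fin n, hf c (x j) (y k)) * ∏ j : Fin n, hf c (x j) z) *
        ∏ k : Fin n, hf c w (y k)) := by
  unfold Aw
  congr 1
  · congr 1
    · -- x-side Vandermonde factor
      rw [Fin.prod_univ_castSucc]
      congr 1
      · refine Finset.prod_congr rfl fun j _ => ?_
        rw [prod_filt_lt_castSucc]
        refine Finset.prod_congr rfl fun k _ => ?_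
        simp [gf]
      · rw [prod_filt_lt_last]
        refine Finset.prod_congr rfl fun k _ => ?_
        simp [gf]
    · -- y-side Vandermonde factor
      rw [Fin.prod_univ_castSucc, filt_gt_last, Finset.prod_empty, mul_one,
        ← Finset.prod_mul_distrib]
      refine Finset.prod_congr rfl fun j _ => ?_
      rw [prod_filt_gt_castSucc]
      simp [gf]
  · -- h factors
    congr 1
    rw [← Finset.prod_mul_distrib]
    refine Finset.prod_congr rfl fun j _ => ?_
    rw [Fin.prod_univ_castSucc]
    simp [hf]

/-- Component formulas for `Nmat`. -/
lemma Nmat_castSucc (c z : ℂ) (n : ℕ) (x y : Fin n → ℂ) (w : ℂ) (j : Fin n) (k : Fin (n+1)) :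
    Nmat c z n x y w (Fin.castSucc j) k = tf c (x j) ((Fin.snoc y z : Fin (n+1) → ℂ) k) := by
  simp [Nmat]

lemma Nmat_last_castSucc (c z : ℂ) (n : ℕ) (x y : Fin n → ℂ) (w : ℂ) (k : Fin n) :
    Nmat c z n x y w (Fin.last n) (Fin.castSucc k) =
      (w - z + c) * c / ((w - y k) * (w - y k + c)) := by
  simp [Nmat]

lemma Nmat_last_last (c z : ℂ) (n : ℕ) (x y : Fin n → ℂ) (w : ℂ) :
    Nmat c z n x y w (Fin.last n) (Fin.last n) = c / (w - z) := by
  simp [Nmat]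

/-- For `w ≠ z - c`, the limiting matrix is the `t`-matrix with last row scaled. -/
lemma Nmat_eq (c z : ℂ) (hc : c ≠ 0) (n : ℕ) (x y : Fin n → ℂ) (w : ℂ) (hw : w - z + c ≠ 0) :
    Nmat c z n x y w =
      Matrix.updateRow
        (Matrix.of fun j k =>
          tf c ((Fin.snoc x w : Fin (n+1) → ℂ) j) ((Fin.snoc y z : Fin (n+1) → ℂ) k))
        (Fin.last n)
        (hf c w z •
          (Matrix.of fun j k =>
            tf c ((Fin.snoc x w : Fin (n+1) → ℂ) j) ((Fin.snoc y z : Fin (n+1) → ℂ) k))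
            (Fin.last n)) := by
  ext j k
  induction j using Fin.lastCases with
  | last =>
    rw [Matrix.updateRow_self, Pi.smul_apply, smul_eq_mul, Matrix.of_apply, Fin.snoc_last]
    induction k using Fin.lastCases with
    | last =>
      rw [Nmat_last_last, Fin.snoc_last]
      simp only [hf, tf]
      rw [div_c_mul_sq _ _ _ hc]
      rcases eq_or_ne (w - z) 0 with h0 | h0
      · rw [h0, zero_mul, div_zero, div_zero]
      · rw [mul_comm (w - z) (w - z + c), mul_div_mul_left _ _ hw]
    | cast k' =>
      rw [Nmat_last_castSucc, Fin.snoc_castSucc]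
      simp only [hf, tf]
      rw [div_c_mul_sq _ _ _ hc]
  | cast j' =>
    rw [Matrix.updateRow_ne (Fin.castSucc_lt_last j').ne, Nmat_castSucc]
    simp


/-- For `w ≠ z - c`, the `(n+1)`-point determinant factors through `Aw` and `Nmat`. -/
lemma K_snoc_eq (c z : ℂ) (hc : c ≠ 0) (n : ℕ) (x y : Fin n → ℂ) (w : ℂ)
    (hw : w - z + c ≠ 0) :
    K c (n+1) (Fin.snoc x w) (Fin.snoc y z) = Aw c z n x y w * (Nmat c z n x y w).det := by
  rw [Nmat_eq c z hc n x y w hw, Matrix.det_updateRow_smul, Matrix.updateRow_eq_self]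
  unfold K Aw
  have hH : (∏ j : Fin (n+1), ∏ k : Fin (n+1),
        hf c ((Fin.snoc x w : Fin (n+1) → ℂ) j) ((Fin.snoc y z : Fin (n+1) → ℂ) k)) =
      ((∏ j : Fin n, ∏ k : Fin (n+1), hf c (x j) ((Fin.snoc y z : Fin (n+1) → ℂ) k)) *
        ((∏ k : Fin n, hf c w (y k)) * hf c w z)) := by
    rw [Fin.prod_univ_castSucc]
    simp only [Fin.snoc_castSucc, Fin.snoc_last]
    rw [Fin.prod_univ_castSucc (f := fun k => hf c w ((Fin.snoc y z : Fin (n+1) → ℂ) k))]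
    simp only [Fin.snoc_castSucc, Fin.snoc_last]
  rw [hH]
  ring

lemma assemble (P1 P2 P3 D E1 E2 E3 E4 : ℂ) (key : E1 * E3 * (E2 * E4) = 1) :
    (P1 * E1) * (E2 * P2) * ((P3 * E3) * E4) * -D = -(P1 * P2 * P3 * D) := by
  calc (P1 * E1) * (E2 * P2) * ((P3 * E3) * E4) * -D
      = -(P1 * P2 * P3 * D) * (E1 * E3 * (E2 * E4)) := by ring
    _ = -(P1 * P2 * P3 * D) := by rw [key, mul_one]

/-- Value of the limit function at `w = z - c`. -/
lemma F_val (c z : ℂ) (hc : c ≠ 0) (n : ℕ) (x y : Fin n → ℂ)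
    (hxz2 : ∀ j, x j ≠ z - c) (hyz1 : ∀ k, y k ≠ z) :
    Aw c z n x y (z - c) * (Nmat c z n x y (z - c)).det = - K c n x y := by
  have hdet : (Nmat c z n x y (z - c)).det =
      - (Matrix.of fun j k => tf c (x j) (y k)).det := by
    rw [Matrix.det_succ_row _ (Fin.last n), Fin.sum_univ_castSucc]
    have h0 : ∀ k : Fin n,
        Nmat c z n x y (z - c) (Fin.last n) (Fin.castSucc k) = 0 := by
      intro k
      rw [Nmat_last_castSucc]
      have : z - c - z + c = 0 := by ring
      rw [this, zero_mul, zero_div]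
    simp only [h0, mul_zero, zero_mul, Finset.sum_const_zero, zero_add]
    rw [Nmat_last_last]
    have h1 : z - c - z = -c := by ring
    rw [h1, div_neg, div_self hc]
    have h2 : ((-1 : ℂ)) ^ ((Fin.last n : ℕ) + (Fin.last n : ℕ)) = 1 := by
      rw [Fin.val_last, ← two_mul, pow_mul]
      norm_num
    rw [h2]
    have h3 : ((Nmat c z n x y (z - c)).submatrix
        (Fin.last n).succAbove (Fin.last n).succAbove) =
        Matrix.of fun j k => tf c (x j) (y k) := by
      ext j k
      simp [Matrix.submatrix_apply, Fin.succAbove_last, Nmat_castSucc]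
    rw [h3]
    ring
  have hneg : ∀ d : ℂ, d ≠ 0 → c / d * (-d / c) = -1 := by
    intro d hd
    field_simp
  have hA : (∏ k : Fin n, gf c (z - c) (x k)) * (∏ j : Fin n, hf c (x j) z) = (-1 : ℂ) ^ n := by
    rw [← Finset.prod_mul_distrib]
    have h1 : ∀ k ∈ Finset.univ, gf c (z - c) (x k) * hf c (x k) z = (-1 : ℂ) := by
      intro k _
      have hd : z - c - x k ≠ 0 := sub_ne_zero.mpr fun h => hxz2 k h.symm
      have e : hf c (x k) z = -(z - c - x k) / c := by
        unfold hf
        ring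
      rw [gf, e]
      exact hneg _ hd
    rw [Finset.prod_congr rfl h1, Finset.prod_const]
    simp
  have hB : (∏ j : Fin n, gf c (y j) z) * (∏ k : Fin n, hf c (z - c) (y k)) = (-1 : ℂ) ^ n := by
    rw [← Finset.prod_mul_distrib]
    have h1 : ∀ k ∈ Finset.univ, gf c (y k) z * hf c (z - c) (y k) = (-1 : ℂ) := by
      intro k _
      have hd : y k - z ≠ 0 := sub_ne_zero.mpr (hyz1 k)
      have e : hf c (z - c) (y k) = -(y k - z) / c := by
        unfold hf
        ring
      rw [gf, e]
      exact hneg _ hd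
    rw [Finset.prod_congr rfl h1, Finset.prod_const]
    simp
  have key : (∏ k : Fin n, gf c (z - c) (x k)) * (∏ j : Fin n, hf c (x j) z) *
      ((∏ j : Fin n, gf c (y j) z) * (∏ k : Fin n, hf c (z - c) (y k))) = 1 := by
    rw [hA, hB, ← pow_add]
    exact Even.neg_one_pow ⟨n, rfl⟩
  rw [hdet, Aw_split]
  unfold K
  exact assemble _ _ _ _ _ _ _ _ key

lemma F_cont (c z : ℂ) (hc : c ≠ 0) (n : ℕ) (x y : Fin n → ℂ)
    (hxz2 : ∀ j, x j ≠ z - c) (hyz : ∀ k, y k ≠ z ∧ y k ≠ z - c) :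
    ContinuousAt (fun w => Aw c z n x y w * (Nmat c z n x y w).det) (z - c) := by
  apply ContinuousAt.mul
  · have hrw : Aw c z n x y = fun w =>
        ((∏ j : Fin n, ∏ k ∈ Finset.univ.filter (fun k => k < j), gf c (x j) (x k)) *
          ∏ k : Fin n, gf c w (x k)) *
        ((∏ j : Fin n, gf c (y j) z) *
          (∏ j : Fin n, ∏ k ∈ Finset.univ.filter (fun k => j < k), gf c (y j) (y k))) *
        (((∏ j : Fin n, ∏ k : Fin n, hf c (x j) (y k)) * ∏ j : Fin n, hf c (x j) z) *
          ∏ k : Fin n, hf c w (y k)) := funext (Aw_split c z n x y)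
    rw [hrw]
    apply ContinuousAt.mul
    apply ContinuousAt.mul
    · apply ContinuousAt.mul continuousAt_const
      apply tendsto_finset_prod
      intro k _
      unfold gf
      exact continuousAt_const.div (by fun_prop)
        (sub_ne_zero.mpr fun h => hxz2 k h.symm)
    · exact continuousAt_const
    · apply ContinuousAt.mul continuousAt_const
      apply tendsto_finset_prod
      intro k _
      unfold hf
      exact ContinuousAt.div (by fun_prop) continuousAt_const hc
  · have hdet : Continuous (Matrix.det : Matrix (Fin (n+1)) (Fin (n+1)) ℂ → ℂ) :=
      Continuous.matrix_det continuous_id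
    apply (hdet.continuousAt).comp
    apply continuousAt_pi'
    intro j
    apply continuousAt_pi'
    intro k
    induction j using Fin.lastCases with
    | last =>
      induction k using Fin.lastCases with
      | last =>
        simp only [Nmat_last_last]
        exact continuousAt_const.div (by fun_prop)
          (fun h => hc (by linear_combination -h))
      | cast k' =>
        simp only [Nmat_last_castSucc]
        refine ContinuousAt.div (by fun_prop) (by fun_prop) (mul_ne_zero ?_ ?_)
        · exact fun h => (hyz k').2 (by linear_combination -h)
        · exact fun h => (hyz k').1 (by linear_combination -h)
    | cast j' =>
      simp only [Nmat_castSucc]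
      exact continuousAt_const

theorem stmt8 (c : ℂ) (hc : c ≠ 0) (n : ℕ) (x y : Fin n → ℂ) (z : ℂ)
    (hx : Function.Injective x) (hy : Function.Injective y)
    (hxy : ∀ j k, x j ≠ y k) (hxyc : ∀ j k, x j ≠ y k - c)
    (hxz : ∀ j, x j ≠ z ∧ x j ≠ z - c) (hyz : ∀ k, y k ≠ z ∧ y k ≠ z - c) :
    Tendsto (fun w => K c (n + 1) (Fin.snoc x w) (Fin.snoc y z))
      (𝓝[≠] (z - c)) (𝓝 (- K c n x y)) := by
  have hF := F_cont c z hc n x y (fun j => (hxz j).2) hyz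
  have hval := F_val c z hc n x y (fun j => (hxz j).2) (fun k => (hyz k).1)
  have h1 : Tendsto (fun w => Aw c z n x y w * (Nmat c z n x y w).det)
      (𝓝[≠] (z - c)) (𝓝 (- K c n x y)) := by
    rw [← hval]
    exact hF.tendsto.mono_left nhdsWithin_le_nhds
  apply Filter.Tendsto.congr' _ h1
  filter_upwards [self_mem_nhdsWithin] with w hw
  have hwne : w ≠ z - c := hw
  have hw' : w - z + c ≠ 0 := fun h => hwne (by linear_combination h)
  exact (K_snoc_eq c z hc n x y w hw').symm
end

section
/- Pole expansion of the Izergin determinant: K_n(x|y) = Σ_{p=1}^{n} g(x_p, yₙ) · ∏_{k<n} f(x_p, y_k) · ∏_{j≠p} f(xⱼ, x_p) · K_{n-1}(x with x_p removed | y₁,...,y_{n-1}), where f(x,y)=(x-y+c)/(x-y) and g(x,y)=c/(x-y). -/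
open Finset Filter Topology

open Polynomial

lemma prod_erase_succAbove {m : ℕ} (p : Fin (m+1)) (F : Fin (m+1) → ℂ) :
    ∏ j ∈ Finset.univ.erase p, F j = ∏ i : Fin m, F (p.succAbove i) := by
  rw [← Finset.compl_singleton, ← Fin.image_succAbove_univ,
    Finset.prod_image (fun a _ b _ h => Fin.succAbove_right_injective h)]

lemma pairs_comm {n : ℕ} (A : Fin n → Fin n → ℂ) :
    ∏ j : Fin n, ∏ k ∈ Finset.univ.filter (fun k => j < k), A j k
      = ∏ j : Fin n, ∏ k ∈ Finset.univ.filter (fun k => k < j), A k j := by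
  simp_rw [Finset.prod_filter]
  exact Finset.prod_comm

lemma prod_pairs_split {m : ℕ} (G : Fin (m+1) → Fin (m+1) → ℂ) (p : Fin (m+1)) :
    (∏ j : Fin (m+1), ∏ k ∈ Finset.univ.filter (fun k => k < j), G j k)
      = (∏ k ∈ Finset.univ.filter (fun k => k < p), G p k) *
        (∏ j ∈ Finset.univ.filter (fun j => p < j), G j p) *
        ∏ i : Fin m, ∏ i' ∈ Finset.univ.filter (fun i' => i' < i), G (p.succAbove i) (p.succAbove i') := by
  simp_rw [Finset.prod_filter]
  rw [Fin.prod_univ_succAbove (fun j => ∏ k, if k < j then G j k else 1) p]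
  have h2 : ∀ i : Fin m, (∏ k, if k < p.succAbove i then G (p.succAbove i) k else 1)
      = (if p < p.succAbove i then G (p.succAbove i) p else 1) *
        ∏ i' : Fin m, if i' < i then G (p.succAbove i) (p.succAbove i') else 1 := by
    intro i
    rw [Fin.prod_univ_succAbove (fun k => if k < p.succAbove i then G (p.succAbove i) k else 1) p]
    have h4 : ∀ i' : Fin m, (if p.succAbove i' < p.succAbove i then G (p.succAbove i) (p.succAbove i') else 1)
        = if i' < i then G (p.succAbove i) (p.succAbove i') else 1 := fun i' => by
      simp only [Fin.succAbove_lt_succAbove_iff]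
    simp_rw [h4]
  simp_rw [h2]
  rw [Finset.prod_mul_distrib]
  have h3 : (∏ i : Fin m, if p < p.succAbove i then G (p.succAbove i) p else 1)
      = ∏ j, if p < j then G j p else 1 := by
    rw [Fin.prod_univ_succAbove (fun j => if p < j then G j p else 1) p]
    simp
  rw [h3]; ring

lemma lagrange_aux {N : ℕ} (u b : Fin N → ℂ) (hb : Function.Injective b) (z : ℂ) :
    ∏ k, (z - u k) = ∏ k, (z - b k) +
      ∑ k : Fin N, (∏ q, (b k - u q)) *
        ∏ l ∈ Finset.univ.erase k, ((z - b l) * (b k - b l)⁻¹) := by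
  have hbInj : Set.InjOn b (Finset.univ : Finset (Fin N)) := fun a _ a' _ h => hb h
  set f : ℂ[X] := Lagrange.nodal Finset.univ u - Lagrange.nodal Finset.univ b with hf
  have heval : ∀ w : ℂ, f.eval w = (∏ k, (w - u k)) - ∏ k, (w - b k) := by
    intro w; simp [hf, Lagrange.eval_nodal]
  have hevalb : ∀ k : Fin N, f.eval (b k) = ∏ q, (b k - u q) := by
    intro k
    have h2 : ∏ l : Fin N, (b k - b l) = 0 :=
      Finset.prod_eq_zero (Finset.mem_univ k) (sub_self (b k))
    rw [heval, h2, sub_zero]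
  have hbasis : ∀ k : Fin N, (Lagrange.basis Finset.univ b k).eval z
      = ∏ l ∈ Finset.univ.erase k, ((z - b l) * (b k - b l)⁻¹) := by
    intro k
    rw [Lagrange.basis, Polynomial.eval_prod]
    refine Finset.prod_congr rfl fun l _ => ?_
    simp [Lagrange.basisDivisor]
    ring
  have key : f.eval z = ∑ k : Fin N, (∏ q, (b k - u q)) *
      ∏ l ∈ Finset.univ.erase k, ((z - b l) * (b k - b l)⁻¹) := by
    by_cases hf0 : f = 0
    · rw [hf0, Polynomial.eval_zero]
      symm
      refine Finset.sum_eq_zero fun k _ => ?_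
      have : (∏ q, (b k - u q)) = 0 := by
        rw [← hevalb k, hf0, Polynomial.eval_zero]
      rw [this, zero_mul]
    · have hdeg : f.degree < (Finset.univ : Finset (Fin N)).card := by
        rcases Nat.eq_zero_or_pos N with h0 | hN
        · exfalso; apply hf0
          have : (Finset.univ : Finset (Fin N)) = ∅ := by
            apply Finset.univ_eq_empty_iff.mpr
            rw [h0]; exact Fin.isEmpty'
          simp [hf, Lagrange.nodal, this]
        · have h1 : (Lagrange.nodal (Finset.univ : Finset (Fin N)) u).degree
              = (Finset.univ : Finset (Fin N)).card := Lagrange.degree_nodal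
          have h2 : (Lagrange.nodal (Finset.univ : Finset (Fin N)) b).degree
              = (Finset.univ : Finset (Fin N)).card := Lagrange.degree_nodal
          have := Polynomial.degree_sub_lt (h1.trans h2.symm) Lagrange.nodal_ne_zero
            (by rw [(Lagrange.nodal_monic).leadingCoeff, (Lagrange.nodal_monic).leadingCoeff])
          rw [← hf] at this
          exact lt_of_lt_of_le this (le_of_eq h1)
      have hint := Lagrange.eq_interpolate hbInj hdeg
      have := congrArg (Polynomial.eval z) hint
      rw [Lagrange.interpolate_apply, Polynomial.eval_finset_sum] at this
      rw [this]
      refine Finset.sum_congr rfl fun k _ => ?_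
      rw [Polynomial.eval_mul, Polynomial.eval_C, hevalb k, hbasis k]
  have := heval z
  rw [key] at this
  linear_combination -this

lemma lagrange_aux' {N : ℕ} (u b : Fin N → ℂ) (hb : Function.Injective b) (z : ℂ) :
    ∏ k, (z - u k) = ∏ k, (z - b k) +
      ∑ k : Fin N, (∏ q, (b k - u q)) * (∏ l ∈ Finset.univ.erase k, (z - b l)) *
        (∏ l ∈ Finset.univ.erase k, (b k - b l))⁻¹ := by
  rw [lagrange_aux u b hb z]
  congr 1
  refine Finset.sum_congr rfl fun k _ => ?_
  rw [Finset.prod_mul_distrib, Finset.prod_inv_distrib, mul_assoc]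

lemma det_expand_last {m : ℕ} (A : Matrix (Fin (m+1)) (Fin (m+1)) ℂ) :
    A.det = ∑ p : Fin (m+1), (-1:ℂ)^((p:ℕ)+m) * A p (Fin.last m) *
      Matrix.det (Matrix.of fun (j k : Fin m) => A (p.succAbove j) (k.castSucc)) := by
  rw [Matrix.det_succ_column A (Fin.last m)]
  refine Finset.sum_congr rfl fun p _ => ?_
  simp only [Fin.val_last, Fin.succAbove_last]
  rfl

lemma sum_cofactor_dup {m : ℕ} (T : Fin (m+1) → Fin m → ℂ) (k0 : Fin m) :
    ∑ p : Fin (m+1), (-1:ℂ)^((p:ℕ)+m) * T p k0 *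
      Matrix.det (Matrix.of fun (j k : Fin m) => T (p.succAbove j) k) = 0 := by
  set A : Matrix (Fin (m+1)) (Fin (m+1)) ℂ :=
    Matrix.of (fun j l => Fin.lastCases (T j k0) (fun l' => T j l') l) with hA
  have h0 : A.det = 0 := by
    refine Matrix.det_zero_of_column_eq (show (Fin.castSucc k0) ≠ Fin.last m from
      (Fin.castSucc_lt_last k0).ne) (fun j => ?_)
    simp [hA]
  have h1 := det_expand_last A
  rw [h0] at h1
  rw [h1]
  refine Finset.sum_congr rfl fun p _ => ?_
  simp [hA]

noncomputable def izE {m : ℕ} (c : ℂ) (x y : Fin (m+1) → ℂ) (k : Fin (m+1)) : ℂ :=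
  ∏ q, (y k - c - x q)

noncomputable def izW {m : ℕ} (y : Fin (m+1) → ℂ) (k : Fin (m+1)) : ℂ :=
  (∏ l ∈ Finset.univ.erase k, (y k - y l))⁻¹

noncomputable def izA {m : ℕ} (c : ℂ) (x y : Fin (m+1) → ℂ) : ℂ :=
  -c * (izE c x y (Fin.last m) * izW y (Fin.last m))⁻¹

noncomputable def izB {m : ℕ} (c : ℂ) (x y : Fin (m+1) → ℂ) (k : Fin m) : ℂ :=
  izA c x y * izE c x y k.castSucc * izW y k.castSucc / c

noncomputable def izV {m : ℕ} (c : ℂ) (x y : Fin (m+1) → ℂ) (p : Fin (m+1)) : ℂ :=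
  -izA c x y * (∏ j, (x p - c - x j)) * (∏ l, (x p - y l))⁻¹

private lemma alg1' (a E w c u P1e P2e : ℂ) (hc : c ≠ 0) (hu : u ≠ 0) (hv : u + c ≠ 0)
    (hP1e : P1e ≠ 0) (hP2e : P2e ≠ 0) :
    a * E * w / c * (c ^ 2 / (u * (u + c)))
      = a * (u * P1e)⁻¹ * (E * P1e * w) + -(a * ((u + c) * P2e)⁻¹) * (E * P2e * w) := by
  field_simp
  ring

private lemma alg2' (a c u E w P1e P2e Pxc : ℂ) (hc : c ≠ 0) (hu : u ≠ 0) (hvv : u + c ≠ 0)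
    (hP1e : P1e ≠ 0) (hP2e : P2e ≠ 0) (hs : a * (E * w) = -c) :
    c ^ 2 / (u * (u + c)) -
      (a * (u * P1e)⁻¹ * (Pxc - u * P1e - E * P1e * w) +
        -(a * ((u + c) * P2e)⁻¹) * (-((u + c) * P2e) - E * P2e * w))
      = -a * Pxc * (u * P1e)⁻¹ := by
  have hs' : a * E * w = -c := by linear_combination hs
  have step1 : a * (u * P1e)⁻¹ * (E * P1e * w) = a * E * w / u := by field_simp
  have step1' : a * (u * P1e)⁻¹ * (E * P1e * w) = -c / u := by rw [step1, hs']
  have step2 : a * (u * P1e)⁻¹ * (u * P1e) = a := by field_simp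
  have step3 : a * ((u + c) * P2e)⁻¹ * (E * P2e * w) = a * E * w / (u + c) := by field_simp
  have step3' : a * ((u + c) * P2e)⁻¹ * (E * P2e * w) = -c / (u + c) := by rw [step3, hs']
  have step4 : a * ((u + c) * P2e)⁻¹ * ((u + c) * P2e) = a := by field_simp
  have hB1 : a * (u * P1e)⁻¹ * (Pxc - u * P1e - E * P1e * w)
      = a * (u * P1e)⁻¹ * Pxc - a * (u * P1e)⁻¹ * (u * P1e)
        - a * (u * P1e)⁻¹ * (E * P1e * w) := by ring
  have hB2 : -(a * ((u + c) * P2e)⁻¹) * (-((u + c) * P2e) - E * P2e * w)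
      = a * ((u + c) * P2e)⁻¹ * ((u + c) * P2e)
        + a * ((u + c) * P2e)⁻¹ * (E * P2e * w) := by ring
  rw [hB1, hB2, step1', step2, step3', step4]
  have key : c ^ 2 / (u * (u + c)) - c / u + c / (u + c) = 0 := by
    field_simp; ring
  linear_combination key

lemma gf_flip (c a b : ℂ) : gf c a b = -gf c b a := by
  rw [gf, gf, show a - b = -(b - a) by ring, div_neg]

set_option maxHeartbeats 2000000 in
private lemma alg3 (c u v A B C1 D Eu F cm e1 e2 : ℂ) (hc : c ≠ 0) (hu : u ≠ 0)
    (hv : v ≠ 0) (hA : A ≠ 0) (hC1 : C1 ≠ 0) (hD : D ≠ 0) (hF : F ≠ 0) (hcm : cm ≠ 0)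
    (he1 : e1 * e1 = 1) (he2 : e2 * e2 = 1) :
    c * u⁻¹ * (B * A⁻¹) * (Eu * D⁻¹)
      = e1 * e2 *
          (-(-c * (-v * (e2 * F) * (e2 * C1)⁻¹)⁻¹) * (-c * (e2 * Eu)) * (u * A)⁻¹) *
        (e1 * (cm * D⁻¹) * (cm * C1⁻¹) * (v * c⁻¹ * (B * cm⁻¹)) * (F * cm⁻¹)) := by
  rcases mul_self_eq_one_iff.mp he1 with h1 | h1 <;>
    rcases mul_self_eq_one_iff.mp he2 with h2 | h2 <;>
      subst h1 <;> subst h2 <;> field_simp <;>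
        (rw [eq_div_iff (mul_ne_zero (mul_ne_zero (mul_ne_zero hv hF) (mul_ne_zero hu hA))
          (mul_ne_zero (mul_ne_zero (mul_ne_zero hD hC1) (mul_ne_zero hc hcm)) hcm))]) <;> ring

lemma lemV {m : ℕ} (c : ℂ) (hc : c ≠ 0) (x y : Fin (m+1) → ℂ)
    (hy : Function.Injective y) (hxy : ∀ j k, x j ≠ y k) (hxyc : ∀ j k, x j ≠ y k - c)
    (p : Fin (m+1)) :
    tf c (x p) (y (Fin.last m)) - ∑ k : Fin m, izB c x y k * tf c (x p) (y k.castSucc)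
      = izV c x y p := by
  have hu : ∀ l, x p - y l ≠ 0 := fun l => sub_ne_zero.mpr (hxy p l)
  have hv : ∀ l, x p - y l + c ≠ 0 := by
    intro l
    have h := sub_ne_zero.mpr (hxyc p l)
    rwa [show x p - (y l - c) = x p - y l + c by ring] at h
  have hPy : (∏ l, (x p - y l)) ≠ 0 := Finset.prod_ne_zero_iff.mpr fun l _ => hu l
  have hPyc : (∏ l, (x p - y l + c)) ≠ 0 := Finset.prod_ne_zero_iff.mpr fun l _ => hv l
  have hErase : ∀ k : Fin (m+1), (∏ l ∈ Finset.univ.erase k, (y k - y l)) ≠ 0 := by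
    intro k
    refine Finset.prod_ne_zero_iff.mpr fun l hl => sub_ne_zero.mpr fun h => ?_
    exact (Finset.mem_erase.1 hl).1 (hy h.symm)
  have hE : ∀ k : Fin (m+1), izE c x y k ≠ 0 := by
    intro k
    refine Finset.prod_ne_zero_iff.mpr fun q _ => sub_ne_zero.mpr fun h => ?_
    exact hxyc q k h.symm
  have hW : ∀ k : Fin (m+1), izW y k ≠ 0 := fun k => inv_ne_zero (hErase k)
  have hPEy : ∀ k : Fin (m+1),
      (x p - y k) * ∏ l ∈ Finset.univ.erase k, (x p - y l) = ∏ l, (x p - y l) :=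
    fun k => Finset.mul_prod_erase Finset.univ (fun l => x p - y l) (Finset.mem_univ k)
  have hPEyc : ∀ k : Fin (m+1),
      (x p - y k + c) * ∏ l ∈ Finset.univ.erase k, (x p - y l + c) = ∏ l, (x p - y l + c) :=
    fun k => Finset.mul_prod_erase Finset.univ (fun l => x p - y l + c) (Finset.mem_univ k)
  have hPE1 : ∀ k : Fin (m+1), (∏ l ∈ Finset.univ.erase k, (x p - y l)) ≠ 0 := by
    intro k; refine Finset.prod_ne_zero_iff.mpr fun l _ => hu l
  have hPE2 : ∀ k : Fin (m+1), (∏ l ∈ Finset.univ.erase k, (x p - y l + c)) ≠ 0 := by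
    intro k; refine Finset.prod_ne_zero_iff.mpr fun l _ => hv l
  have haEW : izA c x y * (izE c x y (Fin.last m) * izW y (Fin.last m)) = -c := by
    have ht : izE c x y (Fin.last m) * izW y (Fin.last m) ≠ 0 :=
      mul_ne_zero (hE _) (hW _)
    rw [izA, mul_assoc, inv_mul_cancel₀ ht, mul_one]
  have hbinj : Function.Injective (fun k : Fin (m+1) => y k - c) := by
    intro a b h
    simp only [sub_left_inj] at h
    exact hy h
  have hA := lagrange_aux' (fun j => x j + c) y hy (x p)
  have hB := lagrange_aux' x (fun k => y k - c) hbinj (x p)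
  simp only [show ∀ A B : ℂ, A - (B + c) = A - c - B from fun _ _ => by ring] at hA
  simp only [sub_sub_sub_cancel_right] at hB
  simp only [show ∀ A B : ℂ, A - (B - c) = A - B + c from fun _ _ => by ring] at hB
  rw [Finset.prod_eq_zero (Finset.mem_univ p) (sub_self (x p))] at hB
  simp only [Fin.sum_univ_castSucc] at hA hB
  have hterm : ∀ k : Fin m, izB c x y k * tf c (x p) (y k.castSucc)
      = izA c x y * (∏ l, (x p - y l))⁻¹ *
          ((∏ q, (y k.castSucc - c - x q)) * (∏ l ∈ Finset.univ.erase k.castSucc, (x p - y l)) *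
            (∏ l ∈ Finset.univ.erase k.castSucc, (y k.castSucc - y l))⁻¹)
        + -(izA c x y * (∏ l, (x p - y l + c))⁻¹) *
          ((∏ q, (y k.castSucc - c - x q)) * (∏ l ∈ Finset.univ.erase k.castSucc, (x p - y l + c)) *
            (∏ l ∈ Finset.univ.erase k.castSucc, (y k.castSucc - y l))⁻¹) := by
    intro k
    rw [← hPEy k.castSucc, ← hPEyc k.castSucc]
    simp only [izB, izE, izW, tf]
    exact alg1' (izA c x y) (∏ q, (y k.castSucc - c - x q))
      ((∏ l ∈ Finset.univ.erase k.castSucc, (y k.castSucc - y l))⁻¹) c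
      (x p - y k.castSucc) (∏ l ∈ Finset.univ.erase k.castSucc, (x p - y l))
      (∏ l ∈ Finset.univ.erase k.castSucc, (x p - y l + c)) hc (hu _) (hv _) (hPE1 _) (hPE2 _)
  rw [Finset.sum_congr rfl (fun k _ => hterm k), Finset.sum_add_distrib,
    ← Finset.mul_sum, ← Finset.mul_sum]
  have hsa : (∑ k : Fin m, (∏ q, (y k.castSucc - c - x q)) *
        (∏ l ∈ Finset.univ.erase k.castSucc, (x p - y l)) *
        (∏ l ∈ Finset.univ.erase k.castSucc, (y k.castSucc - y l))⁻¹)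
      = (∏ k, (x p - c - x k)) - (∏ k, (x p - y k))
        - ((∏ q, (y (Fin.last m) - c - x q)) *
            (∏ l ∈ Finset.univ.erase (Fin.last m), (x p - y l)) *
            (∏ l ∈ Finset.univ.erase (Fin.last m), (y (Fin.last m) - y l))⁻¹) := by
    linear_combination -hA
  have hsb : (∑ k : Fin m, (∏ q, (y k.castSucc - c - x q)) *
        (∏ l ∈ Finset.univ.erase k.castSucc, (x p - y l + c)) *
        (∏ l ∈ Finset.univ.erase k.castSucc, (y k.castSucc - y l))⁻¹)
      = -(∏ k, (x p - y k + c))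
        - ((∏ q, (y (Fin.last m) - c - x q)) *
            (∏ l ∈ Finset.univ.erase (Fin.last m), (x p - y l + c)) *
            (∏ l ∈ Finset.univ.erase (Fin.last m), (y (Fin.last m) - y l))⁻¹) := by
    linear_combination -hB
  rw [hsa, hsb]
  simp only [izV, tf]
  simp only [izE, izW] at haEW
  rw [← hPEy (Fin.last m), ← hPEyc (Fin.last m)]
  exact alg2' (izA c x y) c (x p - y (Fin.last m)) (∏ q, (y (Fin.last m) - c - x q))
    ((∏ l ∈ Finset.univ.erase (Fin.last m), (y (Fin.last m) - y l))⁻¹)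
    (∏ l ∈ Finset.univ.erase (Fin.last m), (x p - y l))
    (∏ l ∈ Finset.univ.erase (Fin.last m), (x p - y l + c))
    (∏ k, (x p - c - x k)) hc (hu _) (hv _) (hPE1 _) (hPE2 _) haEW

lemma lemS {m : ℕ} (c : ℂ) (hc : c ≠ 0) (x y : Fin (m+1) → ℂ)
    (hx : Function.Injective x) (hy : Function.Injective y)
    (hxy : ∀ j k, x j ≠ y k) (hxyc : ∀ j k, x j ≠ y k - c)
    (hxc : ∀ j k, j ≠ k → x j - x k ≠ c ∧ x j - x k ≠ -c) (p : Fin (m+1)) :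
    gf c (x p) (y (Fin.last m)) * (∏ k : Fin m, ff c (x p) (y (Fin.castSucc k))) *
      (∏ j ∈ Finset.univ.erase p, ff c (x j) (x p))
    = (-1:ℂ)^((p:ℕ)+m) * izV c x y p *
      ((∏ k ∈ Finset.univ.filter (fun k => k < p), gf c (x p) (x k)) *
       (∏ j ∈ Finset.univ.filter (fun j => p < j), gf c (x j) (x p)) *
       (∏ j ∈ Finset.univ.filter (fun j => j < Fin.last m), gf c (y j) (y (Fin.last m))) *
       (∏ k : Fin (m+1), hf c (x p) (y k)) *
       (∏ i : Fin m, hf c (x (p.succAbove i)) (y (Fin.last m)))) := by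
  -- conversion of LHS pieces
  have e_gf : gf c (x p) (y (Fin.last m)) = c * (x p - y (Fin.last m))⁻¹ := by
    rw [gf, div_eq_mul_inv]
  have e_ff : (∏ k : Fin m, ff c (x p) (y (Fin.castSucc k)))
      = (∏ k : Fin m, (x p - y k.castSucc + c)) * (∏ k : Fin m, (x p - y k.castSucc))⁻¹ := by
    simp only [ff, div_eq_mul_inv]
    rw [Finset.prod_mul_distrib, Finset.prod_inv_distrib]
  have e_ffx : (∏ j ∈ Finset.univ.erase p, ff c (x j) (x p))
      = (∏ i : Fin m, (x (p.succAbove i) - x p + c)) *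
        (∏ i : Fin m, (x (p.succAbove i) - x p))⁻¹ := by
    rw [prod_erase_succAbove]
    simp only [ff, div_eq_mul_inv]
    rw [Finset.prod_mul_distrib, Finset.prod_inv_distrib]
  -- Q1 * Q1'
  have hIio : Finset.univ.filter (fun k => k < p) = Finset.Iio p := by
    ext k; simp
  have hIoi : Finset.univ.filter (fun j => p < j) = Finset.Ioi p := by
    ext k; simp
  have e_Q1 : (∏ k ∈ Finset.univ.filter (fun k => k < p), gf c (x p) (x k)) *
      (∏ j ∈ Finset.univ.filter (fun j => p < j), gf c (x j) (x p))
      = (-1:ℂ)^(p:ℕ) * ((c^m) * (∏ i : Fin m, (x (p.succAbove i) - x p))⁻¹) := by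
    have h1 : (∏ k ∈ Finset.univ.filter (fun k => k < p), gf c (x p) (x k))
        = (-1:ℂ)^(p:ℕ) * ∏ k ∈ Finset.univ.filter (fun k => k < p), gf c (x k) (x p) := by
      have : ∀ k ∈ Finset.univ.filter (fun k => k < p), gf c (x p) (x k)
          = (-1) * gf c (x k) (x p) := fun k _ => by rw [gf_flip]; ring
      rw [Finset.prod_congr rfl this, Finset.prod_mul_distrib, Finset.prod_const, hIio,
        Fin.card_Iio]
    have hun : (Finset.Ioi p) ∪ (Finset.Iio p) = Finset.univ.erase p := by
      ext k
      simp only [Finset.mem_union, Finset.mem_Ioi, Finset.mem_Iio, Finset.mem_erase,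
        Finset.mem_univ, and_true]
      constructor
      · rintro (h | h)
        · exact h.ne'
        · exact h.ne
      · intro h
        exact (h.lt_or_gt).symm
    rw [h1, hIio, hIoi, mul_assoc, mul_comm (∏ k ∈ Finset.Iio p, gf c (x k) (x p)),
      ← Finset.prod_union (Finset.disjoint_Ioi_Iio p), hun, prod_erase_succAbove]
    congr 1
    simp only [gf, div_eq_mul_inv]
    rw [Finset.prod_mul_distrib, Finset.prod_inv_distrib, Finset.prod_const, Finset.card_univ,
      Fintype.card_fin]
  -- Q2
  have e_Q2 : (∏ j ∈ Finset.univ.filter (fun j => j < Fin.last m), gf c (y j) (y (Fin.last m)))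
      = (c^m) * (∏ k : Fin m, (y k.castSucc - y (Fin.last m)))⁻¹ := by
    have hflt : Finset.univ.filter (fun j => j < Fin.last m)
        = Finset.univ.erase (Fin.last m) := by
      ext k
      simp [Fin.lt_last_iff_ne_last]
    rw [hflt, prod_erase_succAbove]
    simp only [Fin.succAbove_last, gf, div_eq_mul_inv]
    rw [Finset.prod_mul_distrib, Finset.prod_inv_distrib, Finset.prod_const, Finset.card_univ,
      Fintype.card_fin]
  -- Q3
  have e_Q3 : (∏ k : Fin (m+1), hf c (x p) (y k))
      = ((x p - y (Fin.last m) + c) * c⁻¹) *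
        ((∏ k : Fin m, (x p - y k.castSucc + c)) * (c^m)⁻¹) := by
    rw [Fin.prod_univ_succAbove (fun k => hf c (x p) (y k)) (Fin.last m)]
    simp only [Fin.succAbove_last, hf, div_eq_mul_inv]
    rw [Finset.prod_mul_distrib, Finset.prod_const, Finset.card_univ, Fintype.card_fin, inv_pow]
  have e_Q3' : (∏ i : Fin m, hf c (x (p.succAbove i)) (y (Fin.last m)))
      = (∏ i : Fin m, (x (p.succAbove i) - y (Fin.last m) + c)) * (c^m)⁻¹ := by
    simp only [hf, div_eq_mul_inv]
    rw [Finset.prod_mul_distrib, Finset.prod_const, Finset.card_univ, Fintype.card_fin, inv_pow]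
  -- izV pieces
  have e_Pxc : (∏ j, (x p - c - x j))
      = (-c) * ((-1:ℂ)^m * ∏ i : Fin m, (x (p.succAbove i) - x p + c)) := by
    rw [Fin.prod_univ_succAbove (fun j => x p - c - x j) p, sub_sub_cancel_left]
    congr 1
    have : ∀ i : Fin m, x p - c - x (p.succAbove i) = (-1) * (x (p.succAbove i) - x p + c) :=
      fun i => by ring
    rw [Finset.prod_congr rfl (fun i _ => this i), Finset.prod_mul_distrib, Finset.prod_const,
      Finset.card_univ, Fintype.card_fin]
  have e_Py : (∏ l, (x p - y l))
      = (x p - y (Fin.last m)) * ∏ k : Fin m, (x p - y k.castSucc) := by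
    rw [Fin.prod_univ_succAbove (fun l => x p - y l) (Fin.last m)]
    simp only [Fin.succAbove_last]
  have e_izE : izE c x y (Fin.last m)
      = (-(x p - y (Fin.last m) + c)) *
        ((-1:ℂ)^m * ∏ i : Fin m, (x (p.succAbove i) - y (Fin.last m) + c)) := by
    rw [izE, Fin.prod_univ_succAbove (fun q => y (Fin.last m) - c - x q) p]
    congr 1
    · ring
    · have : ∀ i : Fin m, y (Fin.last m) - c - x (p.succAbove i)
          = (-1) * (x (p.succAbove i) - y (Fin.last m) + c) := fun i => by ring
      rw [Finset.prod_congr rfl (fun i _ => this i), Finset.prod_mul_distrib, Finset.prod_const,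
        Finset.card_univ, Fintype.card_fin]
  have e_izW : izW y (Fin.last m)
      = ((-1:ℂ)^m * ∏ k : Fin m, (y k.castSucc - y (Fin.last m)))⁻¹ := by
    rw [izW, prod_erase_succAbove]
    simp only [Fin.succAbove_last]
    congr 1
    have : ∀ k : Fin m, y (Fin.last m) - y k.castSucc
        = (-1) * (y k.castSucc - y (Fin.last m)) := fun k => by ring
    rw [Finset.prod_congr rfl (fun k _ => this k), Finset.prod_mul_distrib, Finset.prod_const,
      Finset.card_univ, Fintype.card_fin]
  -- assemble
  rw [e_gf, e_ff, e_ffx, e_Q1, e_Q2, e_Q3, e_Q3', izV, izA, e_izE, e_izW, e_Pxc, e_Py, pow_add]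
  have hu : x p - y (Fin.last m) ≠ 0 := sub_ne_zero.mpr (hxy p (Fin.last m))
  have hv : x p - y (Fin.last m) + c ≠ 0 := by
    have h := sub_ne_zero.mpr (hxyc p (Fin.last m))
    rwa [show x p - (y (Fin.last m) - c) = x p - y (Fin.last m) + c by ring] at h
  have hA : (∏ k : Fin m, (x p - y k.castSucc)) ≠ 0 :=
    Finset.prod_ne_zero_iff.mpr fun k _ => sub_ne_zero.mpr (hxy p k.castSucc)
  have hC1 : (∏ k : Fin m, (y k.castSucc - y (Fin.last m))) ≠ 0 :=
    Finset.prod_ne_zero_iff.mpr fun k _ => sub_ne_zero.mpr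
      (fun h => (Fin.castSucc_lt_last k).ne (hy h))
  have hD : (∏ i : Fin m, (x (p.succAbove i) - x p)) ≠ 0 :=
    Finset.prod_ne_zero_iff.mpr fun i _ => sub_ne_zero.mpr
      (fun h => (Fin.succAbove_ne p i) (hx h))
  have hF : (∏ i : Fin m, (x (p.succAbove i) - y (Fin.last m) + c)) ≠ 0 := by
    refine Finset.prod_ne_zero_iff.mpr fun i _ => ?_
    have h := sub_ne_zero.mpr (hxyc (p.succAbove i) (Fin.last m))
    rwa [show x (p.succAbove i) - (y (Fin.last m) - c)
      = x (p.succAbove i) - y (Fin.last m) + c by ring] at h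
  have hcm : (c:ℂ)^m ≠ 0 := pow_ne_zero m hc
  have he1 : (-1:ℂ)^(p:ℕ) * (-1:ℂ)^(p:ℕ) = 1 := by
    rw [← pow_add]
    exact Even.neg_one_pow ⟨(p:ℕ), rfl⟩
  have he2 : (-1:ℂ)^m * (-1:ℂ)^m = 1 := by
    rw [← pow_add]
    exact Even.neg_one_pow ⟨m, rfl⟩
  exact alg3 c (x p - y (Fin.last m)) (x p - y (Fin.last m) + c) (∏ k : Fin m, (x p - y k.castSucc))
    (∏ k : Fin m, (x p - y k.castSucc + c)) (∏ k : Fin m, (y k.castSucc - y (Fin.last m)))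
    (∏ i : Fin m, (x (p.succAbove i) - x p)) (∏ i : Fin m, (x (p.succAbove i) - x p + c))
    (∏ i : Fin m, (x (p.succAbove i) - y (Fin.last m) + c)) (c^m) ((-1:ℂ)^(p:ℕ)) ((-1:ℂ)^m)
    hc hu hv hA hC1 hD hF hcm he1 he2

set_option maxHeartbeats 1000000 in
theorem stmt12 (c : ℂ) (hc : c ≠ 0) (m : ℕ) (x y : Fin (m + 1) → ℂ)
    (hx : Function.Injective x) (hy : Function.Injective y)
    (hxy : ∀ j k, x j ≠ y k) (hxyc : ∀ j k, x j ≠ y k - c)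
    (hxc : ∀ j k, j ≠ k → x j - x k ≠ c ∧ x j - x k ≠ -c) :
    K c (m + 1) x y =
      ∑ p : Fin (m + 1),
        gf c (x p) (y (Fin.last m)) *
        (∏ k : Fin m, ff c (x p) (y (Fin.castSucc k))) *
        (∏ j ∈ Finset.univ.erase p, ff c (x j) (x p)) *
        K c m (fun i => x (p.succAbove i)) (fun k => y (Fin.castSucc k)) := by
  classical
  have hRHS : ∀ p : Fin (m+1),
      gf c (x p) (y (Fin.last m)) * (∏ k : Fin m, ff c (x p) (y (Fin.castSucc k))) *
        (∏ j ∈ Finset.univ.erase p, ff c (x j) (x p)) *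
        K c m (fun i => x (p.succAbove i)) (fun k => y (Fin.castSucc k))
      = (-1:ℂ)^((p:ℕ)+m) * izV c x y p *
          Matrix.det (Matrix.of fun (j k : Fin m) => tf c (x (p.succAbove j)) (y k.castSucc)) *
          ((∏ j : Fin (m+1), ∏ k ∈ Finset.univ.filter (fun k => k < j), gf c (x j) (x k)) *
           (∏ j : Fin (m+1), ∏ k ∈ Finset.univ.filter (fun k => j < k), gf c (y j) (y k)) *
           (∏ j : Fin (m+1), ∏ k : Fin (m+1), hf c (x j) (y k))) := by
    intro p
    have hKm : K c m (fun i => x (p.succAbove i)) (fun k => y (Fin.castSucc k))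
        = (∏ j : Fin m, ∏ k ∈ Finset.univ.filter (fun k => k < j),
            gf c (x (p.succAbove j)) (x (p.succAbove k))) *
          (∏ j : Fin m, ∏ k ∈ Finset.univ.filter (fun k => j < k),
            gf c (y (Fin.castSucc j)) (y (Fin.castSucc k))) *
          (∏ j : Fin m, ∏ k : Fin m, hf c (x (p.succAbove j)) (y (Fin.castSucc k))) *
          Matrix.det (Matrix.of fun (j k : Fin m) =>
            tf c (x (p.succAbove j)) (y (Fin.castSucc k))) := rfl
    rw [hKm, lemS c hc x y hx hy hxy hxyc hxc p]
    have hs1 := prod_pairs_split (fun j k => gf c (x j) (x k)) p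
    have hs2 : (∏ j : Fin (m+1), ∏ k ∈ Finset.univ.filter (fun k => j < k), gf c (y j) (y k))
        = (∏ j ∈ Finset.univ.filter (fun j => j < Fin.last m), gf c (y j) (y (Fin.last m))) *
          (∏ j : Fin m, ∏ k ∈ Finset.univ.filter (fun k => j < k),
            gf c (y (Fin.castSucc j)) (y (Fin.castSucc k))) := by
      rw [pairs_comm (fun j k => gf c (y j) (y k)),
          prod_pairs_split (fun j k => gf c (y k) (y j)) (Fin.last m)]
      have hempty : Finset.univ.filter (fun j : Fin (m+1) => Fin.last m < j) = ∅ := by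
        ext j
        simp only [Finset.mem_filter, Finset.mem_univ, true_and, Finset.notMem_empty, iff_false]
        exact fun h => absurd h (not_lt.mpr (Fin.le_last j))
      rw [hempty, Finset.prod_empty, mul_one]
      rw [pairs_comm (fun (j k : Fin m) => gf c (y (Fin.castSucc j)) (y (Fin.castSucc k)))]
      simp only [Fin.succAbove_last]
    have hs3 : (∏ j : Fin (m+1), ∏ k : Fin (m+1), hf c (x j) (y k))
        = (∏ k : Fin (m+1), hf c (x p) (y k)) *
          ((∏ i : Fin m, hf c (x (p.succAbove i)) (y (Fin.last m))) *
           (∏ j : Fin m, ∏ k : Fin m, hf c (x (p.succAbove j)) (y (Fin.castSucc k)))) := by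
      rw [Fin.prod_univ_succAbove (fun j => ∏ k, hf c (x j) (y k)) p]
      congr 1
      have hinner : ∀ i : Fin m, (∏ k, hf c (x (p.succAbove i)) (y k))
          = hf c (x (p.succAbove i)) (y (Fin.last m)) *
            ∏ k : Fin m, hf c (x (p.succAbove i)) (y (Fin.castSucc k)) := by
        intro i
        rw [Fin.prod_univ_succAbove (fun k => hf c (x (p.succAbove i)) (y k)) (Fin.last m)]
        simp only [Fin.succAbove_last]
      rw [Finset.prod_congr rfl (fun i _ => hinner i), Finset.prod_mul_distrib]
    rw [hs1, hs2, hs3]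
    ring
  rw [Finset.sum_congr rfl (fun p _ => hRHS p)]
  have hdet := det_expand_last (Matrix.of fun j k => tf c (x j) (y k))
  simp only [Matrix.of_apply] at hdet
  rw [K, hdet]
  have hVp : ∀ p : Fin (m+1), izV c x y p
      = tf c (x p) (y (Fin.last m)) - ∑ k : Fin m, izB c x y k * tf c (x p) (y k.castSucc) :=
    fun p => (lemV c hc x y hy hxy hxyc p).symm
  have hkey : (∑ p : Fin (m+1), (-1:ℂ)^((p:ℕ)+m) * izV c x y p *
        Matrix.det (Matrix.of fun (j k : Fin m) => tf c (x (p.succAbove j)) (y k.castSucc)))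
      = ∑ p : Fin (m+1), (-1:ℂ)^((p:ℕ)+m) * tf c (x p) (y (Fin.last m)) *
        Matrix.det (Matrix.of fun (j k : Fin m) => tf c (x (p.succAbove j)) (y k.castSucc)) := by
    have hsplit : ∀ p : Fin (m+1), (-1:ℂ)^((p:ℕ)+m) * izV c x y p *
        Matrix.det (Matrix.of fun (j k : Fin m) => tf c (x (p.succAbove j)) (y k.castSucc))
        = (-1:ℂ)^((p:ℕ)+m) * tf c (x p) (y (Fin.last m)) *
            Matrix.det (Matrix.of fun (j k : Fin m) => tf c (x (p.succAbove j)) (y k.castSucc))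
          - ∑ k : Fin m, izB c x y k * ((-1:ℂ)^((p:ℕ)+m) * tf c (x p) (y k.castSucc) *
            Matrix.det (Matrix.of fun (j k : Fin m) =>
              tf c (x (p.succAbove j)) (y k.castSucc))) := by
      intro p
      rw [hVp p,
        show ∀ s t S M : ℂ, s * (t - S) * M = s * t * M - S * (s * M) from
          fun s t S M => by ring]
      congr 1
      rw [Finset.sum_mul]
      exact Finset.sum_congr rfl fun k _ => by ring
    rw [Finset.sum_congr rfl (fun p _ => hsplit p), Finset.sum_sub_distrib]
    have hzero : (∑ p : Fin (m+1), ∑ k : Fin m, izB c x y k *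
        ((-1:ℂ)^((p:ℕ)+m) * tf c (x p) (y k.castSucc) *
          Matrix.det (Matrix.of fun (j k : Fin m) => tf c (x (p.succAbove j)) (y k.castSucc))))
        = 0 := by
      rw [Finset.sum_comm]
      refine Finset.sum_eq_zero fun k _ => ?_
      rw [← Finset.mul_sum]
      have hd := sum_cofactor_dup (fun q l => tf c (x q) (y l.castSucc)) k
      rw [hd, mul_zero]
    rw [hzero, sub_zero]
  rw [← Finset.sum_mul, hkey]
  exact mul_comm _ _
end

section
/- Symmetrization formula for the Izergin determinant: K_n(x|y) = Σ_{σ ∈ Sₙ} ∏_{j=1}^n g(x_{σ(j)}, yⱼ) · ∏_{j>k} f(x_{σ(j)}, y_k) f(x_{σ(k)}, x_{σ(j)}), where f(x,y)=(x-y+c)/(x-y) and g(x,y)=c/(x-y). -/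
open Finset Filter Topology

noncomputable def Z (c : ℂ) (n : ℕ) (x y : Fin n → ℂ) : ℂ :=
  ∑ σ : Equiv.Perm (Fin n),
    (∏ j : Fin n, gf c (x (σ j)) (y j)) *
    ∏ j : Fin n, ∏ k ∈ Finset.univ.filter (fun k => k < j),
      (ff c (x (σ j)) (y k) * ff c (x (σ k)) (x (σ j)))

lemma ff_eq {c : ℂ} (hc : c ≠ 0) (a b : ℂ) : ff c a b = gf c a b * hf c a b := by
  unfold ff gf hf
  rcases eq_or_ne (a - b) 0 with h | h
  · simp [h]
  · field_simp

/-- split a `k < j` double product at `last`. -/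
lemma prod_lt_split {n : ℕ} (F : Fin (n+1) → Fin (n+1) → ℂ) :
    ∏ j : Fin (n+1), ∏ k ∈ Finset.univ.filter (fun k => k < j), F j k
    = (∏ j : Fin n, ∏ k ∈ Finset.univ.filter (fun k => k < j), F j.castSucc k.castSucc)
      * ∏ k : Fin n, F (Fin.last n) k.castSucc := by
  rw [Fin.prod_univ_castSucc
    (f := fun j => ∏ k ∈ Finset.univ.filter (fun k => k < j), F j k)]
  congr 1
  · refine Finset.prod_congr rfl fun j _ => ?_
    have hs : Finset.univ.filter (fun k : Fin (n+1) => k < j.castSucc)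
        = (Finset.univ.filter (fun k : Fin n => k < j)).map Fin.castSuccEmb := by
      ext k
      simp only [Finset.mem_filter, Finset.mem_univ, true_and, Finset.mem_map,
        Fin.castSuccEmb, Function.Embedding.coeFn_mk]
      constructor
      · intro hk
        have hk' : k ≠ Fin.last n := Fin.ne_last_of_lt hk
        obtain ⟨k', rfl⟩ := Fin.exists_castSucc_eq.2 hk'
        exact ⟨k', Fin.castSucc_lt_castSucc_iff.1 hk, rfl⟩
      · rintro ⟨k', hk', rfl⟩
        exact Fin.castSucc_lt_castSucc_iff.2 hk'
    rw [hs, Finset.prod_map]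
    rfl
  · have hs : Finset.univ.filter (fun k : Fin (n+1) => k < Fin.last n)
        = (Finset.univ : Finset (Fin n)).map Fin.castSuccEmb := by
      ext k
      simp only [Finset.mem_filter, Finset.mem_univ, true_and, Finset.mem_map,
        Fin.castSuccEmb, Function.Embedding.coeFn_mk]
      constructor
      · intro hk
        obtain ⟨k', rfl⟩ := Fin.exists_castSucc_eq.2 (Fin.ne_last_of_lt hk)
        exact ⟨k', rfl⟩
      · rintro ⟨k', rfl⟩
        exact Fin.castSucc_lt_last k'
    rw [hs, Finset.prod_map]
    rfl

/-- split a `j < k` double product at `last`. -/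
lemma prod_gt_split {n : ℕ} (F : Fin (n+1) → Fin (n+1) → ℂ) :
    ∏ j : Fin (n+1), ∏ k ∈ Finset.univ.filter (fun k => j < k), F j k
    = (∏ j : Fin n, ∏ k ∈ Finset.univ.filter (fun k => j < k), F j.castSucc k.castSucc)
      * ∏ j : Fin n, F j.castSucc (Fin.last n) := by
  rw [Fin.prod_univ_castSucc
    (f := fun j => ∏ k ∈ Finset.univ.filter (fun k => j < k), F j k)]
  have hlast : Finset.univ.filter (fun k : Fin (n+1) => Fin.last n < k) = ∅ := by
    ext k
    simp [Fin.le_last k, not_lt.2 (Fin.le_last k)]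
  rw [hlast]
  simp only [Finset.prod_empty, mul_one]
  rw [← Finset.prod_mul_distrib]
  refine Finset.prod_congr rfl fun j _ => ?_
  have hs : Finset.univ.filter (fun k : Fin (n+1) => j.castSucc < k)
      = insert (Fin.last n) ((Finset.univ.filter (fun k : Fin n => j < k)).map Fin.castSuccEmb) := by
    ext k
    simp only [Finset.mem_filter, Finset.mem_univ, true_and, Finset.mem_insert, Finset.mem_map,
      Fin.castSuccEmb, Function.Embedding.coeFn_mk]
    constructor
    · intro hk
      rcases eq_or_ne k (Fin.last n) with h | h
      · exact Or.inl h
      · obtain ⟨k', rfl⟩ := Fin.exists_castSucc_eq.2 h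
        exact Or.inr ⟨k', Fin.castSucc_lt_castSucc_iff.1 hk, rfl⟩
    · rintro (rfl | ⟨k', hk', rfl⟩)
      · exact Fin.castSucc_lt_last j
      · exact Fin.castSucc_lt_castSucc_iff.2 hk'
  rw [hs, Finset.prod_insert (by simp [Fin.castSuccEmb]; intro a _; exact (Fin.castSucc_lt_last a).ne),
    Finset.prod_map]
  rw [mul_comm]
  rfl

/-- split a `k < j` double product at an arbitrary index `i`. -/
lemma prod_split_at {n : ℕ} (F : Fin (n+1) → Fin (n+1) → ℂ) (i : Fin (n+1)) :
    ∏ j : Fin (n+1), ∏ k ∈ Finset.univ.filter (fun k => k < j), F j k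
    = (∏ j : Fin n, ∏ k ∈ Finset.univ.filter (fun k => k < j), F (i.succAbove j) (i.succAbove k))
      * ∏ k : Fin n,
          (if i.succAbove k < i then F i (i.succAbove k) else F (i.succAbove k) i) := by
  simp_rw [Finset.prod_filter]
  rw [Fin.prod_univ_succAbove (fun j => ∏ k : Fin (n+1), if k < j then F j k else 1) i]
  rw [Fin.prod_univ_succAbove (fun k : Fin (n+1) => if k < i then F i k else 1) i]
  simp only [lt_irrefl, if_false, one_mul]
  have h2 : ∀ j : Fin n,
      (∏ k : Fin (n+1), if k < i.succAbove j then F (i.succAbove j) k else 1)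
      = (if i < i.succAbove j then F (i.succAbove j) i else 1)
        * ∏ k : Fin n, if k < j then F (i.succAbove j) (i.succAbove k) else 1 := by
    intro j
    rw [Fin.prod_univ_succAbove (fun k : Fin (n+1) =>
      if k < i.succAbove j then F (i.succAbove j) k else 1) i]
    congr 1
    simp only [Fin.succAbove_lt_succAbove_iff]
  simp_rw [h2]
  rw [Finset.prod_mul_distrib]
  have hcomb : (∏ k : Fin n, if i.succAbove k < i then F i (i.succAbove k) else 1)
      * (∏ k : Fin n, if i < i.succAbove k then F (i.succAbove k) i else 1)
      = ∏ k : Fin n, (if i.succAbove k < i then F i (i.succAbove k) else F (i.succAbove k) i) := by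
    rw [← Finset.prod_mul_distrib]
    refine Finset.prod_congr rfl fun k _ => ?_
    rcases lt_or_gt_of_ne (Fin.succAbove_ne i k) with h | h
    · simp [h, asymm h]
    · simp [h, asymm h]
  rw [← hcomb]
  ring

lemma card_filter_succAbove_lt {n : ℕ} (i : Fin (n+1)) :
    (Finset.univ.filter (fun k : Fin n => i.succAbove k < i)).card = (i : ℕ) := by
  have hcond : ∀ k : Fin n, (i.succAbove k < i) ↔ ((k : ℕ) < (i : ℕ)) := by
    intro k
    rw [Fin.succAbove_lt_iff_castSucc_lt]
    exact Iff.rfl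
  simp_rw [hcond]
  apply Finset.card_eq_of_bijective (fun m hm => ⟨m, lt_of_lt_of_le hm (Nat.lt_succ_iff.mp i.isLt)⟩)
  · intro a ha
    simp only [Finset.mem_filter, Finset.mem_univ, true_and] at ha
    exact ⟨a, ha, rfl⟩
  · intro m hm
    simp [hm]
  · intro m m' hm hm' h
    exact congrArg Fin.val h

section Peel
variable {n : ℕ}

private def pf (i : Fin (n+1)) (π : Equiv.Perm (Fin n)) : Fin (n+1) → Fin (n+1) :=
  Fin.lastCases i (fun k => i.succAbove (π k))

private lemma pf_last (i : Fin (n+1)) (π : Equiv.Perm (Fin n)) : pf i π (Fin.last n) = i :=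
  Fin.lastCases_last

private lemma pf_castSucc (i : Fin (n+1)) (π : Equiv.Perm (Fin n)) (k : Fin n) :
    pf i π k.castSucc = i.succAbove (π k) :=
  Fin.lastCases_castSucc ..

private lemma pf_inj (i : Fin (n+1)) (π : Equiv.Perm (Fin n)) : Function.Injective (pf i π) := by
  intro a b hab
  induction a using Fin.lastCases with
  | last =>
    induction b using Fin.lastCases with
    | last => rfl
    | cast b =>
      rw [pf_last, pf_castSucc] at hab
      exact absurd hab.symm (Fin.succAbove_ne i (π b))
  | cast a =>
    induction b using Fin.lastCases with
    | last =>
      rw [pf_last, pf_castSucc] at hab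
      exact absurd hab (Fin.succAbove_ne i (π a))
    | cast b =>
      rw [pf_castSucc, pf_castSucc] at hab
      exact congrArg Fin.castSucc (π.injective (Fin.succAbove_right_injective hab))

private noncomputable def Φ (p : Fin (n+1) × Equiv.Perm (Fin n)) : Equiv.Perm (Fin (n+1)) :=
  Equiv.ofBijective (pf p.1 p.2)
    ((Finite.injective_iff_bijective).mp (pf_inj p.1 p.2))

private lemma Φ_apply (p : Fin (n+1) × Equiv.Perm (Fin n)) (a : Fin (n+1)) :
    Φ p a = pf p.1 p.2 a := rfl

private lemma Φ_bij : Function.Bijective (Φ (n := n)) := by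
  rw [Fintype.bijective_iff_injective_and_card]
  constructor
  · intro p q hpq
    have happ : ∀ a, pf p.1 p.2 a = pf q.1 q.2 a := by
      intro a
      rw [← Φ_apply, ← Φ_apply, hpq]
    have h1 : p.1 = q.1 := by
      have := happ (Fin.last n)
      rwa [pf_last, pf_last] at this
    have h2 : p.2 = q.2 := by
      ext k
      have := happ k.castSucc
      rw [pf_castSucc, pf_castSucc, h1] at this
      exact congrArg Fin.val (Fin.succAbove_right_injective this)
    exact Prod.ext h1 h2
  · simp [Fintype.card_perm, Nat.factorial_succ]

lemma Z_succ (c : ℂ) (x y : Fin (n+1) → ℂ) :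
    Z c (n+1) x y = ∑ i : Fin (n+1),
      gf c (x i) (y (Fin.last n)) *
        ((∏ k : Fin n, ff c (x i) (y k.castSucc)) *
         (∏ k : Fin n, ff c (x (i.succAbove k)) (x i)) *
         Z c n (x ∘ i.succAbove) (y ∘ Fin.castSucc)) := by
  unfold Z
  have hre := Fintype.sum_bijective (Φ (n := n)) Φ_bij
    (fun p => (∏ j : Fin (n+1), gf c (x (Φ p j)) (y j)) *
      ∏ j : Fin (n+1), ∏ k ∈ Finset.univ.filter (fun k => k < j),
        (ff c (x (Φ p j)) (y k) * ff c (x (Φ p k)) (x (Φ p j))))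
    (fun σ => (∏ j : Fin (n+1), gf c (x (σ j)) (y j)) *
      ∏ j : Fin (n+1), ∏ k ∈ Finset.univ.filter (fun k => k < j),
        (ff c (x (σ j)) (y k) * ff c (x (σ k)) (x (σ j))))
    (fun p => rfl)
  rw [← hre, Fintype.sum_prod_type]
  refine Finset.sum_congr rfl fun i _ => ?_
  simp only [Finset.mul_sum]
  refine Finset.sum_congr rfl fun π _ => ?_
  have hgf : (∏ j : Fin (n+1), gf c (x (Φ (i, π) j)) (y j))
      = (∏ j : Fin n, gf c (x (i.succAbove (π j))) (y j.castSucc)) * gf c (x i) (y (Fin.last n)) := by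
    rw [Fin.prod_univ_castSucc]
    simp only [Φ_apply, pf_castSucc, pf_last]
  have hdp : (∏ j : Fin (n+1), ∏ k ∈ Finset.univ.filter (fun k => k < j),
        (ff c (x (Φ (i, π) j)) (y k) * ff c (x (Φ (i, π) k)) (x (Φ (i, π) j))))
      = (∏ j : Fin n, ∏ k ∈ Finset.univ.filter (fun k => k < j),
          (ff c (x (i.succAbove (π j))) (y k.castSucc)
            * ff c (x (i.succAbove (π k))) (x (i.succAbove (π j)))))
        * ((∏ k : Fin n, ff c (x i) (y k.castSucc))
            * (∏ k : Fin n, ff c (x (i.succAbove k)) (x i))) := by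
    rw [prod_lt_split (fun j k => ff c (x (Φ (i, π) j)) (y k) * ff c (x (Φ (i, π) k)) (x (Φ (i, π) j)))]
    simp only [Φ_apply, pf_castSucc, pf_last]
    congr 1
    rw [Finset.prod_mul_distrib]
    congr 1
    exact Equiv.prod_comp π (fun k => ff c (x (i.succAbove k)) (x i))
  rw [hgf, hdp]
  simp only [Function.comp_apply]
  ring
end Peel

section Node
variable {n : ℕ} {c : ℂ}

lemma nodeX (hc : c ≠ 0) (x y : Fin (n+1) → ℂ)
    (hx : Function.Injective x)
    (hxy : ∀ j k, x j ≠ y k) (i : Fin (n+1)) :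
    (∏ j : Fin (n+1), ∏ k ∈ Finset.univ.filter (fun k => k < j), gf c (x j) (x k))
    * (∏ j : Fin n, ∏ k ∈ Finset.univ.filter (fun k => j < k), gf c (y j.castSucc) (y k.castSucc))
    * (∏ j : Fin (n+1), ∏ k : Fin n, hf c (x j) (y k.castSucc))
    * c *
    ((-1 : ℂ) ^ ((i : ℕ) + n)
      * Matrix.det (Matrix.of fun a b : Fin n => tf c (x (i.succAbove a)) (y b.castSucc))
      * (∏ k : Fin n, (x (i.succAbove k) - x i))
      * (∏ k : Fin n, (x (i.succAbove k) + c - x i)))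
    = c * ((∏ k : Fin n, ff c (x i) (y k.castSucc)) *
        (∏ k : Fin n, ff c (x (i.succAbove k)) (x i)) *
        K c n (x ∘ i.succAbove) (y ∘ Fin.castSucc))
      * (∏ k : Fin n, (x (i.succAbove k) - x i))
      * (∏ j : Fin n, (y j.castSucc - x i)) := by
  have hK : K c n (x ∘ i.succAbove) (y ∘ Fin.castSucc)
      = (∏ j : Fin n, ∏ k ∈ Finset.univ.filter (fun k => k < j),
          gf c (x (i.succAbove j)) (x (i.succAbove k)))
        * (∏ j : Fin n, ∏ k ∈ Finset.univ.filter (fun k => j < k),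
            gf c (y j.castSucc) (y k.castSucc))
        * (∏ j : Fin n, ∏ k : Fin n, hf c (x (i.succAbove j)) (y k.castSucc))
        * Matrix.det (Matrix.of fun a b : Fin n => tf c (x (i.succAbove a)) (y b.castSucc)) := by
    unfold K
    simp only [Function.comp_apply]
  have hA := prod_split_at (fun j k => gf c (x j) (x k)) i
  have hC : (∏ j : Fin (n+1), ∏ k : Fin n, hf c (x j) (y k.castSucc))
      = (∏ k : Fin n, hf c (x i) (y k.castSucc))
        * ∏ j : Fin n, ∏ k : Fin n, hf c (x (i.succAbove j)) (y k.castSucc) :=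
    Fin.prod_univ_succAbove (fun j => ∏ k : Fin n, hf c (x j) (y k.castSucc)) i
  have hPx : (∏ k : Fin n, (x (i.succAbove k) - x i)) ≠ 0 :=
    Finset.prod_ne_zero_iff.mpr fun k _ => sub_ne_zero.2 (hx.ne (Fin.succAbove_ne i k))
  have hDy : (∏ k : Fin n, (x i - y k.castSucc)) ≠ 0 :=
    Finset.prod_ne_zero_iff.mpr fun k _ => sub_ne_zero.2 (hxy i k.castSucc)
  have hi : (i : ℕ) ≤ n := Nat.lt_succ_iff.mp i.isLt
  have hcn : (c : ℂ) ^ n ≠ 0 := pow_ne_zero _ hc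
  have e4 : (∏ k : Fin n, (if i.succAbove k < i then gf c (x i) (x (i.succAbove k))
        else gf c (x (i.succAbove k)) (x i))) * (∏ k : Fin n, (x (i.succAbove k) - x i))
      = (-1 : ℂ) ^ (i : ℕ) * c ^ n := by
    rw [← Finset.prod_mul_distrib]
    have hterm : ∀ k : Fin n,
        (if i.succAbove k < i then gf c (x i) (x (i.succAbove k))
          else gf c (x (i.succAbove k)) (x i)) * (x (i.succAbove k) - x i)
        = (if i.succAbove k < i then -c else c) := by
      intro k
      have hne : x (i.succAbove k) - x i ≠ 0 := sub_ne_zero.2 (hx.ne (Fin.succAbove_ne i k))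
      have hne' : x i - x (i.succAbove k) ≠ 0 := fun h => hne (by linear_combination -h)
      rcases lt_or_gt_of_ne (Fin.succAbove_ne i k) with h | h
      · rw [if_pos h, if_pos h]
        unfold gf
        field_simp
        ring
      · rw [if_neg (asymm h), if_neg (asymm h)]
        unfold gf
        field_simp
    rw [Finset.prod_congr rfl (fun k _ => hterm k)]
    rw [Finset.prod_ite (fun _ => -c) (fun _ => c), Finset.prod_const, Finset.prod_const,
      card_filter_succAbove_lt]
    have hcard : (Finset.univ.filter (fun k : Fin n => ¬ i.succAbove k < i)).card = n - (i : ℕ) := by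
      have h2 := Finset.card_filter_add_card_filter_not
        (s := (Finset.univ : Finset (Fin n))) (p := fun k : Fin n => i.succAbove k < i)
      rw [card_filter_succAbove_lt, Finset.card_univ, Fintype.card_fin] at h2
      omega
    rw [hcard, neg_pow]
    rw [mul_assoc, ← pow_add, Nat.add_sub_cancel' hi]
  have e1 : (∏ k : Fin n, ff c (x i) (y k.castSucc)) * (∏ k : Fin n, (x i - y k.castSucc))
      = ∏ k : Fin n, (x i - y k.castSucc + c) := by
    rw [← Finset.prod_mul_distrib]
    refine Finset.prod_congr rfl fun k _ => ?_
    unfold ff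
    exact div_mul_cancel₀ _ (sub_ne_zero.2 (hxy i k.castSucc))
  have e2 : (∏ k : Fin n, ff c (x (i.succAbove k)) (x i))
        * (∏ k : Fin n, (x (i.succAbove k) - x i))
      = ∏ k : Fin n, (x (i.succAbove k) - x i + c) := by
    rw [← Finset.prod_mul_distrib]
    refine Finset.prod_congr rfl fun k _ => ?_
    unfold ff
    exact div_mul_cancel₀ _ (sub_ne_zero.2 (hx.ne (Fin.succAbove_ne i k)))
  have e3 : (∏ k : Fin n, hf c (x i) (y k.castSucc)) * c ^ n
      = ∏ k : Fin n, (x i - y k.castSucc + c) := by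
    have hcpow : (c : ℂ) ^ n = ∏ _k : Fin n, c := by
      rw [Finset.prod_const, Finset.card_univ, Fintype.card_fin]
    rw [hcpow, ← Finset.prod_mul_distrib]
    refine Finset.prod_congr rfl fun k _ => ?_
    unfold hf
    exact div_mul_cancel₀ _ hc
  have e5 : (∏ j : Fin n, (y j.castSucc - x i))
      = (-1 : ℂ) ^ n * ∏ k : Fin n, (x i - y k.castSucc) := by
    have hstep : ∀ j : Fin n, y j.castSucc - x i = (-1) * (x i - y j.castSucc) := fun j => by ring
    rw [Finset.prod_congr rfl (fun j _ => hstep j), Finset.prod_mul_distrib,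
      Finset.prod_const, Finset.card_univ, Fintype.card_fin]
  have e6 : (∏ k : Fin n, (x (i.succAbove k) + c - x i))
      = ∏ k : Fin n, (x (i.succAbove k) - x i + c) :=
    Finset.prod_congr rfl fun k _ => by ring
  have e7 : ((-1 : ℂ) ^ ((i : ℕ) + n)) * ((-1 : ℂ) ^ (i : ℕ)) = (-1 : ℂ) ^ n := by
    rw [← pow_add]
    have hexp : (i : ℕ) + n + (i : ℕ) = n + 2 * (i : ℕ) := by ring
    rw [hexp, pow_add, pow_mul]
    norm_num
  rw [hK, hA, hC]
  set Ai := ∏ j : Fin n, ∏ k ∈ Finset.univ.filter (fun k => k < j),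
    gf c (x (i.succAbove j)) (x (i.succAbove k)) with hAidef
  set Bp := ∏ j : Fin n, ∏ k ∈ Finset.univ.filter (fun k => j < k),
    gf c (y j.castSucc) (y k.castSucc) with hBpdef
  set Ci := ∏ j : Fin n, ∏ k : Fin n, hf c (x (i.succAbove j)) (y k.castSucc) with hCidef
  set Dd := Matrix.det (Matrix.of fun a b : Fin n => tf c (x (i.succAbove a)) (y b.castSucc))
    with hDddef
  set Lx := ∏ k : Fin n, (if i.succAbove k < i then gf c (x i) (x (i.succAbove k))
    else gf c (x (i.succAbove k)) (x i)) with hLxdef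
  set Hx := ∏ k : Fin n, hf c (x i) (y k.castSucc) with hHxdef
  set F1 := ∏ k : Fin n, ff c (x i) (y k.castSucc) with hF1def
  set F2 := ∏ k : Fin n, ff c (x (i.succAbove k)) (x i) with hF2def
  set Px := ∏ k : Fin n, (x (i.succAbove k) - x i) with hPxdef
  set PcA := ∏ k : Fin n, (x (i.succAbove k) + c - x i) with hPcAdef
  set Pc2 := ∏ k : Fin n, (x (i.succAbove k) - x i + c) with hPc2def
  set Py := ∏ j : Fin n, (y j.castSucc - x i) with hPydef
  set Dy := ∏ k : Fin n, (x i - y k.castSucc) with hDydef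
  set N1 := ∏ k : Fin n, (x i - y k.castSucc + c) with hN1def
  apply mul_right_cancel₀ (mul_ne_zero hDy hcn)
  linear_combination
    (Ai * Bp * Ci * c * Dd * (-1 : ℂ) ^ ((i : ℕ) + n) * Lx * Hx * Px * Dy * c ^ n) * e6
    + (Ai * Bp * Ci * c * Dd * (-1 : ℂ) ^ ((i : ℕ) + n) * Hx * Pc2 * Dy * c ^ n) * e4
    + (Ai * Bp * Ci * c * Dd * (-1 : ℂ) ^ ((i : ℕ) + n) * (-1 : ℂ) ^ (i : ℕ) * c ^ n * Pc2 * Dy) * e3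
    + (Ai * Bp * Ci * c * Dd * c ^ n * N1 * Pc2 * Dy) * e7
    - (Ai * Bp * Ci * c * Dd * F1 * F2 * Px * Dy * c ^ n) * e5
    - (Ai * Bp * Ci * c * Dd * c ^ n * (-1 : ℂ) ^ n * Dy * F1 * Dy) * e2
    - (Ai * Bp * Ci * c * Dd * c ^ n * (-1 : ℂ) ^ n * Dy * Pc2) * e1
end Node

lemma ndeg_lin_prod {n : ℕ} (a : Fin n → ℂ) :
    (∏ k : Fin n, (Polynomial.C (a k) - Polynomial.X)).natDegree ≤ n := by
  refine le_trans (Polynomial.natDegree_prod_le _ _) ?_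
  calc ∑ k : Fin n, (Polynomial.C (a k) - Polynomial.X).natDegree
      ≤ ∑ _k : Fin n, 1 := by
        refine Finset.sum_le_sum fun k _ => ?_
        refine le_trans (Polynomial.natDegree_sub_le _ _) ?_
        simp
    _ = n := by simp

lemma KZ (c : ℂ) (hc : c ≠ 0) :
    ∀ (n : ℕ) (x y : Fin n → ℂ), Function.Injective x → Function.Injective y →
      (∀ j k, x j ≠ y k) → (∀ j k, x j - y k ≠ -c) → K c n x y = Z c n x y := by
  intro n
  induction n with
  | zero =>
    intro x y _ _ _ _
    unfold K Z
    simp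
  | succ n ih =>
    intro x y hx hy hxy hyc
    have hxw : ∀ l : Fin (n+1), x l - y (Fin.last n) ≠ 0 :=
      fun l => sub_ne_zero.2 (hxy l (Fin.last n))
    have hxwc : ∀ l : Fin (n+1), x l - y (Fin.last n) + c ≠ 0 := by
      intro l h
      exact hyc l (Fin.last n) (by linear_combination h)
    have hyw : ∀ j : Fin n, y j.castSucc - y (Fin.last n) ≠ 0 :=
      fun j => sub_ne_zero.2 (hy.ne (Fin.castSucc_lt_last j).ne)
    -- the two polynomials
    set P : Polynomial ℂ := Polynomial.C
        ((∏ j : Fin (n+1), ∏ k ∈ Finset.univ.filter (fun k => k < j), gf c (x j) (x k))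
          * (∏ j : Fin n, ∏ k ∈ Finset.univ.filter (fun k => j < k),
              gf c (y j.castSucc) (y k.castSucc))
          * (∏ j : Fin (n+1), ∏ k : Fin n, hf c (x j) (y k.castSucc)) * c) *
      ∑ i : Fin (n+1), Polynomial.C ((-1 : ℂ) ^ ((i : ℕ) + n)
          * Matrix.det (Matrix.of fun a b : Fin n => tf c (x (i.succAbove a)) (y b.castSucc))) *
        ((∏ k : Fin n, (Polynomial.C (x (i.succAbove k)) - Polynomial.X)) *
         (∏ k : Fin n, (Polynomial.C (x (i.succAbove k) + c) - Polynomial.X))) with hPdef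
    set Q : Polynomial ℂ := (∑ i : Fin (n+1), Polynomial.C (c *
          ((∏ k : Fin n, ff c (x i) (y k.castSucc)) *
           (∏ k : Fin n, ff c (x (i.succAbove k)) (x i)) *
           K c n (x ∘ i.succAbove) (y ∘ Fin.castSucc))) *
        ∏ k : Fin n, (Polynomial.C (x (i.succAbove k)) - Polynomial.X)) *
        ∏ j : Fin n, (Polynomial.C (y j.castSucc) - Polynomial.X) with hQdef
    have hPeval : ∀ z : ℂ, P.eval z =
        ((∏ j : Fin (n+1), ∏ k ∈ Finset.univ.filter (fun k => k < j), gf c (x j) (x k))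
          * (∏ j : Fin n, ∏ k ∈ Finset.univ.filter (fun k => j < k),
              gf c (y j.castSucc) (y k.castSucc))
          * (∏ j : Fin (n+1), ∏ k : Fin n, hf c (x j) (y k.castSucc)) * c) *
        ∑ i : Fin (n+1), (-1 : ℂ) ^ ((i : ℕ) + n)
            * Matrix.det (Matrix.of fun a b : Fin n => tf c (x (i.succAbove a)) (y b.castSucc))
            * ((∏ k : Fin n, (x (i.succAbove k) - z))
              * (∏ k : Fin n, (x (i.succAbove k) + c - z))) := by
      intro z
      rw [hPdef]
      simp only [Polynomial.eval_mul, Polynomial.eval_finset_sum, Polynomial.eval_prod,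
        Polynomial.eval_C, Polynomial.eval_X, Polynomial.eval_sub, mul_assoc]
    have hQeval : ∀ z : ℂ, Q.eval z =
        (∑ i : Fin (n+1), c *
          ((∏ k : Fin n, ff c (x i) (y k.castSucc)) *
           (∏ k : Fin n, ff c (x (i.succAbove k)) (x i)) *
           K c n (x ∘ i.succAbove) (y ∘ Fin.castSucc)) *
          ∏ k : Fin n, (x (i.succAbove k) - z)) *
        ∏ j : Fin n, (y j.castSucc - z) := by
      intro z
      rw [hQdef]
      simp only [Polynomial.eval_mul, Polynomial.eval_finset_sum, Polynomial.eval_prod,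
        Polynomial.eval_C, Polynomial.eval_X, Polynomial.eval_sub]
    have hnode : ∀ i : Fin (n+1), P.eval (x i) = Q.eval (x i) := by
      intro i
      rw [hPeval, hQeval]
      have hcolP : (∑ i' : Fin (n+1), (-1 : ℂ) ^ ((i' : ℕ) + n)
            * Matrix.det (Matrix.of fun a b : Fin n => tf c (x (i'.succAbove a)) (y b.castSucc))
            * ((∏ k : Fin n, (x (i'.succAbove k) - x i))
              * (∏ k : Fin n, (x (i'.succAbove k) + c - x i))))
          = (-1 : ℂ) ^ ((i : ℕ) + n)
            * Matrix.det (Matrix.of fun a b : Fin n => tf c (x (i.succAbove a)) (y b.castSucc))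
            * ((∏ k : Fin n, (x (i.succAbove k) - x i))
              * (∏ k : Fin n, (x (i.succAbove k) + c - x i))) := by
        refine Finset.sum_eq_single_of_mem i (Finset.mem_univ i) fun i' _ hne => ?_
        obtain ⟨z0, hz0⟩ := Fin.exists_succAbove_eq (Ne.symm hne)
        have h0 : (∏ k : Fin n, (x (i'.succAbove k) - x i)) = 0 :=
          Finset.prod_eq_zero (Finset.mem_univ z0) (by rw [hz0, sub_self])
        rw [h0]
        ring
      have hcolQ : (∑ i' : Fin (n+1), c *
            ((∏ k : Fin n, ff c (x i') (y k.castSucc)) *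
             (∏ k : Fin n, ff c (x (i'.succAbove k)) (x i')) *
             K c n (x ∘ i'.succAbove) (y ∘ Fin.castSucc)) *
            ∏ k : Fin n, (x (i'.succAbove k) - x i))
          = c * ((∏ k : Fin n, ff c (x i) (y k.castSucc)) *
             (∏ k : Fin n, ff c (x (i.succAbove k)) (x i)) *
             K c n (x ∘ i.succAbove) (y ∘ Fin.castSucc)) *
            ∏ k : Fin n, (x (i.succAbove k) - x i) := by
        refine Finset.sum_eq_single_of_mem i (Finset.mem_univ i) fun i' _ hne => ?_
        obtain ⟨z0, hz0⟩ := Fin.exists_succAbove_eq (Ne.symm hne)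
        have h0 : (∏ k : Fin n, (x (i'.succAbove k) - x i)) = 0 :=
          Finset.prod_eq_zero (Finset.mem_univ z0) (by rw [hz0, sub_self])
        rw [h0, mul_zero]
      rw [hcolP, hcolQ]
      linear_combination nodeX hc x y hx hxy i
    have hnodeY : ∀ m : Fin n, P.eval (y m.castSucc) = Q.eval (y m.castSucc) := by
      intro m
      rw [hPeval, hQeval]
      have hQ0 : (∏ j : Fin n, (y j.castSucc - y m.castSucc)) = 0 :=
        Finset.prod_eq_zero (Finset.mem_univ m) (sub_self _)
      rw [hQ0, mul_zero]
      have hdet0 : Matrix.det (Matrix.of fun (j k : Fin (n+1)) =>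
          tf c (x j) (if k = Fin.last n then y m.castSucc else y k)) = 0 := by
        refine Matrix.det_zero_of_column_eq (i := m.castSucc) (j := Fin.last n)
          (Fin.castSucc_lt_last m).ne fun j => ?_
        simp [(Fin.castSucc_lt_last m).ne]
      have hexp : Matrix.det (Matrix.of fun (j k : Fin (n+1)) =>
            tf c (x j) (if k = Fin.last n then y m.castSucc else y k))
          = ∑ i : Fin (n+1), (-1 : ℂ) ^ ((i : ℕ) + n) * tf c (x i) (y m.castSucc)
            * Matrix.det (Matrix.of fun a b : Fin n =>
                tf c (x (i.succAbove a)) (y b.castSucc)) := by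
        rw [Matrix.det_succ_column _ (Fin.last n)]
        refine Finset.sum_congr rfl fun i _ => ?_
        have e1 : (-1 : ℂ) ^ ((i : ℕ) + ((Fin.last n) : ℕ)) = (-1 : ℂ) ^ ((i : ℕ) + n) := by
          rw [Fin.val_last]
        have e2 : ((Matrix.of fun (j k : Fin (n+1)) =>
              tf c (x j) (if k = Fin.last n then y m.castSucc else y k)).submatrix
                i.succAbove (Fin.last n).succAbove)
            = Matrix.of fun a b : Fin n => tf c (x (i.succAbove a)) (y b.castSucc) := by
          ext a b
          simp [Fin.succAbove_last, (Fin.castSucc_lt_last b).ne]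
        rw [e1, e2]
        simp
      have hsum0 : (∑ i : Fin (n+1), (-1 : ℂ) ^ ((i : ℕ) + n)
            * Matrix.det (Matrix.of fun a b : Fin n => tf c (x (i.succAbove a)) (y b.castSucc))
            * ((∏ k : Fin n, (x (i.succAbove k) - y m.castSucc))
              * (∏ k : Fin n, (x (i.succAbove k) + c - y m.castSucc)))) = 0 := by
        have hkey : (∑ i : Fin (n+1), (-1 : ℂ) ^ ((i : ℕ) + n)
              * Matrix.det (Matrix.of fun a b : Fin n => tf c (x (i.succAbove a)) (y b.castSucc))
              * ((∏ k : Fin n, (x (i.succAbove k) - y m.castSucc))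
                * (∏ k : Fin n, (x (i.succAbove k) + c - y m.castSucc)))) * c ^ 2
            = ((∏ l : Fin (n+1), (x l - y m.castSucc))
                * (∏ l : Fin (n+1), (x l + c - y m.castSucc)))
              * ∑ i : Fin (n+1), (-1 : ℂ) ^ ((i : ℕ) + n) * tf c (x i) (y m.castSucc)
                * Matrix.det (Matrix.of fun a b : Fin n =>
                    tf c (x (i.succAbove a)) (y b.castSucc)) := by
          rw [Finset.sum_mul, Finset.mul_sum]
          refine Finset.sum_congr rfl fun i _ => ?_
          rw [Fin.prod_univ_succAbove (fun l => x l - y m.castSucc) i,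
            Fin.prod_univ_succAbove (fun l => x l + c - y m.castSucc) i]
          have h1 : x i - y m.castSucc ≠ 0 := sub_ne_zero.2 (hxy i m.castSucc)
          have h2 : x i - y m.castSucc + c ≠ 0 := fun h => hyc i m.castSucc (by linear_combination h)
          have htf : tf c (x i) (y m.castSucc)
              * ((x i - y m.castSucc) * (x i + c - y m.castSucc)) = c ^ 2 := by
            unfold tf
            rw [div_mul_eq_mul_div, div_eq_iff (mul_ne_zero h1 h2)]
            ring
          linear_combination (-((-1 : ℂ) ^ ((i : ℕ) + n))
            * Matrix.det (Matrix.of fun a b : Fin n => tf c (x (i.succAbove a)) (y b.castSucc))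
            * (∏ k : Fin n, (x (i.succAbove k) - y m.castSucc))
            * (∏ k : Fin n, (x (i.succAbove k) + c - y m.castSucc))) * htf
        rw [← hexp, hdet0, mul_zero] at hkey
        rcases mul_eq_zero.mp hkey with h0 | h0
        · exact h0
        · exact absurd h0 (pow_ne_zero 2 hc)
      rw [hsum0, mul_zero]
    have hPQ : P = Q := by
      have hdegP : P.natDegree ≤ 0 + (n + n) := by
        rw [hPdef]
        refine le_trans Polynomial.natDegree_mul_le ?_
        refine add_le_add (Polynomial.natDegree_C _).le ?_
        refine Polynomial.natDegree_sum_le_of_forall_le _ _ fun i _ => ?_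
        refine le_trans Polynomial.natDegree_mul_le ?_
        rw [Polynomial.natDegree_C, zero_add]
        refine le_trans Polynomial.natDegree_mul_le ?_
        exact add_le_add (ndeg_lin_prod _) (ndeg_lin_prod _)
      have hdegQ : Q.natDegree ≤ n + n := by
        rw [hQdef]
        refine le_trans Polynomial.natDegree_mul_le ?_
        refine add_le_add ?_ (ndeg_lin_prod _)
        refine Polynomial.natDegree_sum_le_of_forall_le _ _ fun i _ => ?_
        refine le_trans Polynomial.natDegree_mul_le ?_
        rw [Polynomial.natDegree_C, zero_add]
        exact ndeg_lin_prod _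
      have hPQ0 : P - Q = 0 := by
        refine Polynomial.eq_zero_of_natDegree_lt_card_of_eval_eq_zero' (P - Q)
          ((Finset.univ.image x) ∪ (Finset.univ.image (fun j : Fin n => y j.castSucc))) ?_ ?_
        · intro z hz
          rw [Polynomial.eval_sub, sub_eq_zero]
          rcases Finset.mem_union.mp hz with h | h
          · obtain ⟨i, _, rfl⟩ := Finset.mem_image.mp h
            exact hnode i
          · obtain ⟨j, _, rfl⟩ := Finset.mem_image.mp h
            exact hnodeY j
        · have hycinj : Function.Injective (fun j : Fin n => y j.castSucc) :=
            fun a b h => Fin.castSucc_injective n (hy h)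
          have hcard : ((Finset.univ.image x)
              ∪ (Finset.univ.image (fun j : Fin n => y j.castSucc))).card = (n+1) + n := by
            rw [Finset.card_union_of_disjoint]
            · rw [Finset.card_image_of_injective _ hx, Finset.card_image_of_injective _ hycinj]
              simp
            · refine Finset.disjoint_left.mpr ?_
              rintro a ha hb
              obtain ⟨i, _, rfl⟩ := Finset.mem_image.mp ha
              obtain ⟨j, _, hj⟩ := Finset.mem_image.mp hb
              exact hxy i j.castSucc hj.symm
          rw [hcard]
          have hsub := Polynomial.natDegree_sub_le P Q
          omega
      exact sub_eq_zero.mp hPQ0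
    have hBsplit := prod_gt_split (fun j k => gf c (y j) (y k))
    have hCsplit : (∏ j : Fin (n+1), ∏ k : Fin (n+1), hf c (x j) (y k))
        = (∏ j : Fin (n+1), ∏ k : Fin n, hf c (x j) (y k.castSucc))
          * ∏ l : Fin (n+1), hf c (x l) (y (Fin.last n)) := by
      rw [← Finset.prod_mul_distrib]
      refine Finset.prod_congr rfl fun j _ => ?_
      rw [Fin.prod_univ_castSucc (f := fun k => hf c (x j) (y k))]
    have hdet2 : Matrix.det (Matrix.of fun j k : Fin (n+1) => tf c (x j) (y k))
        = ∑ i : Fin (n+1), (-1 : ℂ) ^ ((i : ℕ) + n) * tf c (x i) (y (Fin.last n))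
          * Matrix.det (Matrix.of fun a b : Fin n => tf c (x (i.succAbove a)) (y b.castSucc)) := by
      rw [Matrix.det_succ_column _ (Fin.last n)]
      refine Finset.sum_congr rfl fun i _ => ?_
      have e1 : (-1 : ℂ) ^ ((i : ℕ) + ((Fin.last n) : ℕ)) = (-1 : ℂ) ^ ((i : ℕ) + n) := by
        rw [Fin.val_last]
      have e2 : ((Matrix.of fun j k : Fin (n+1) => tf c (x j) (y k)).submatrix
            i.succAbove (Fin.last n).succAbove)
          = Matrix.of fun a b : Fin n => tf c (x (i.succAbove a)) (y b.castSucc) := by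
        ext a b
        simp [Fin.succAbove_last]
      rw [e1, e2]
      simp
    have hKw : K c (n+1) x y
        * ((∏ l : Fin (n+1), (x l - y (Fin.last n)))
          * (∏ j : Fin n, (y j.castSucc - y (Fin.last n))))
        = P.eval (y (Fin.last n)) := by
      rw [hPeval]
      unfold K
      rw [hBsplit, hCsplit, hdet2]
      have f1 : (∏ j : Fin n, gf c (y j.castSucc) (y (Fin.last n)))
          * (∏ j : Fin n, (y j.castSucc - y (Fin.last n))) = c ^ n := by
        rw [← Finset.prod_mul_distrib]
        have hstep : ∀ j : Fin n,
            gf c (y j.castSucc) (y (Fin.last n)) * (y j.castSucc - y (Fin.last n)) = c :=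
          fun j => by unfold gf; exact div_mul_cancel₀ _ (hyw j)
        rw [Finset.prod_congr rfl fun j _ => hstep j, Finset.prod_const, Finset.card_univ,
          Fintype.card_fin]
      have f2 : (∏ l : Fin (n+1), hf c (x l) (y (Fin.last n))) * c ^ (n+1)
          = ∏ l : Fin (n+1), (x l + c - y (Fin.last n)) := by
        have hcpow : (c : ℂ) ^ (n+1) = ∏ _l : Fin (n+1), c := by
          rw [Finset.prod_const, Finset.card_univ, Fintype.card_fin]
        rw [hcpow, ← Finset.prod_mul_distrib]
        refine Finset.prod_congr rfl fun l _ => ?_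
        unfold hf
        rw [div_mul_cancel₀ _ hc]
        ring
      have f3 : (∑ i : Fin (n+1), (-1 : ℂ) ^ ((i : ℕ) + n) * tf c (x i) (y (Fin.last n))
            * Matrix.det (Matrix.of fun a b : Fin n => tf c (x (i.succAbove a)) (y b.castSucc)))
          * ((∏ l : Fin (n+1), (x l - y (Fin.last n)))
            * (∏ l : Fin (n+1), (x l + c - y (Fin.last n))))
          = c ^ 2 * ∑ i : Fin (n+1), (-1 : ℂ) ^ ((i : ℕ) + n)
            * Matrix.det (Matrix.of fun a b : Fin n => tf c (x (i.succAbove a)) (y b.castSucc))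
            * ((∏ k : Fin n, (x (i.succAbove k) - y (Fin.last n)))
              * (∏ k : Fin n, (x (i.succAbove k) + c - y (Fin.last n)))) := by
        rw [Finset.sum_mul, Finset.mul_sum]
        refine Finset.sum_congr rfl fun i _ => ?_
        rw [Fin.prod_univ_succAbove (fun l => x l - y (Fin.last n)) i,
          Fin.prod_univ_succAbove (fun l => x l + c - y (Fin.last n)) i]
        have htf : tf c (x i) (y (Fin.last n))
            * ((x i - y (Fin.last n)) * (x i + c - y (Fin.last n))) = c ^ 2 := by
          unfold tf
          rw [div_mul_eq_mul_div, div_eq_iff (mul_ne_zero (hxw i) (hxwc i))]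
          ring
        linear_combination ((-1 : ℂ) ^ ((i : ℕ) + n)
          * Matrix.det (Matrix.of fun a b : Fin n => tf c (x (i.succAbove a)) (y b.castSucc))
          * (∏ k : Fin n, (x (i.succAbove k) - y (Fin.last n)))
          * (∏ k : Fin n, (x (i.succAbove k) + c - y (Fin.last n)))) * htf
      apply mul_right_cancel₀ (pow_ne_zero (n+1) hc)
      linear_combination
        ((∏ j : Fin (n+1), ∏ k ∈ Finset.univ.filter (fun k => k < j), gf c (x j) (x k))
          * (∏ j : Fin n, ∏ k ∈ Finset.univ.filter (fun k => j < k),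
              gf c (y j.castSucc) (y k.castSucc))
          * (∏ j : Fin (n+1), ∏ k : Fin n, hf c (x j) (y k.castSucc))
          * (∏ l : Fin (n+1), hf c (x l) (y (Fin.last n)))
          * (∑ i : Fin (n+1), (-1 : ℂ) ^ ((i : ℕ) + n) * tf c (x i) (y (Fin.last n))
              * Matrix.det (Matrix.of fun a b : Fin n =>
                  tf c (x (i.succAbove a)) (y b.castSucc)))
          * (∏ l : Fin (n+1), (x l - y (Fin.last n))) * c ^ (n+1)) * f1
        + ((∏ j : Fin (n+1), ∏ k ∈ Finset.univ.filter (fun k => k < j), gf c (x j) (x k))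
          * (∏ j : Fin n, ∏ k ∈ Finset.univ.filter (fun k => j < k),
              gf c (y j.castSucc) (y k.castSucc))
          * (∏ j : Fin (n+1), ∏ k : Fin n, hf c (x j) (y k.castSucc))
          * c ^ n
          * (∑ i : Fin (n+1), (-1 : ℂ) ^ ((i : ℕ) + n) * tf c (x i) (y (Fin.last n))
              * Matrix.det (Matrix.of fun a b : Fin n =>
                  tf c (x (i.succAbove a)) (y b.castSucc)))
          * (∏ l : Fin (n+1), (x l - y (Fin.last n)))) * f2
        + ((∏ j : Fin (n+1), ∏ k ∈ Finset.univ.filter (fun k => k < j), gf c (x j) (x k))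
          * (∏ j : Fin n, ∏ k ∈ Finset.univ.filter (fun k => j < k),
              gf c (y j.castSucc) (y k.castSucc))
          * (∏ j : Fin (n+1), ∏ k : Fin n, hf c (x j) (y k.castSucc))
          * c ^ n) * f3
    have hZw : Q.eval (y (Fin.last n))
        = Z c (n+1) x y * ((∏ l : Fin (n+1), (x l - y (Fin.last n)))
          * (∏ j : Fin n, (y j.castSucc - y (Fin.last n)))) := by
      rw [hQeval, Z_succ]
      have hcoK : ∀ i : Fin (n+1),
          Z c n (x ∘ i.succAbove) (y ∘ Fin.castSucc)
          = K c n (x ∘ i.succAbove) (y ∘ Fin.castSucc) := by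
        intro i
        exact (ih (x ∘ i.succAbove) (y ∘ Fin.castSucc)
          (hx.comp Fin.succAbove_right_injective)
          (hy.comp (Fin.castSucc_injective n))
          (fun j k => hxy (i.succAbove j) k.castSucc)
          (fun j k => hyc (i.succAbove j) k.castSucc)).symm
      simp_rw [hcoK]
      rw [Finset.sum_mul, Finset.sum_mul]
      refine Finset.sum_congr rfl fun i _ => ?_
      rw [Fin.prod_univ_succAbove (fun l => x l - y (Fin.last n)) i]
      have hgf : gf c (x i) (y (Fin.last n)) * (x i - y (Fin.last n)) = c := by
        unfold gf
        exact div_mul_cancel₀ _ (hxw i)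
      linear_combination (-((∏ k : Fin n, ff c (x i) (y k.castSucc)) *
        (∏ k : Fin n, ff c (x (i.succAbove k)) (x i)) *
        K c n (x ∘ i.succAbove) (y ∘ Fin.castSucc) *
        (∏ k : Fin n, (x (i.succAbove k) - y (Fin.last n))) *
        (∏ j : Fin n, (y j.castSucc - y (Fin.last n))))) * hgf
    have hne : ((∏ l : Fin (n+1), (x l - y (Fin.last n)))
        * (∏ j : Fin n, (y j.castSucc - y (Fin.last n)))) ≠ 0 :=
      mul_ne_zero (Finset.prod_ne_zero_iff.mpr fun l _ => hxw l)
        (Finset.prod_ne_zero_iff.mpr fun j _ => hyw j)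
    apply mul_right_cancel₀ hne
    rw [hKw, hPQ, hZw]

theorem stmt13 (c : ℂ) (hc : c ≠ 0) (n : ℕ) (x y : Fin n → ℂ)
    (hx : Function.Injective x) (hy : Function.Injective y)
    (hxy : ∀ j k, x j ≠ y k)
    (hxyc : ∀ j k, x j - y k ≠ c ∧ x j - y k ≠ -c)
    (hxc : ∀ j k, j ≠ k → x j - x k ≠ c) :
    K c n x y =
      ∑ σ : Equiv.Perm (Fin n),
        (∏ j : Fin n, gf c (x (σ j)) (y j)) *
        ∏ j : Fin n, ∏ k ∈ Finset.univ.filter (fun k => k < j),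
          (ff c (x (σ j)) (y k) * ff c (x (σ k)) (x (σ j))) := by
  rw [KZ c hc n x y hx hy hxy (fun j k => (hxyc j k).2)]
  rfl
end

section
/- Holomorphy under shifted coincidence: if x₂ = x₁ - c, then the function x₁ ↦ K_n(x₁, x₁-c, x₃,...,xₙ | y₁,...,yₙ) has removable singularities at the points x₁ = y_k for k = 1,...,n; i.e., the apparent poles of the determinant entries t(x₁,y_k), t(x₂,y_k) at x₁ = y_k are cancelled by the zeros of the prefactor h(x₂, y_k) = g(x₁, y_k)⁻¹. -/
open Finset Filter Topology

/-! Absorb the factor `∏ⱼ h(xⱼ, y_l)` into column `l` of `det[t(xⱼ, y_l)]`. At `x₁ = y_k` with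
`x₂ = x₁ - c`, only column `k` has poles, all simple, coming from `t(x₁, y_k)` and `t(x₂, y_k)`;
its factor contains `h(x₂, y_k) = (x₁ - y_k)/c`, which cancels them. Every other factor is
continuous at `y_k` by the genericity hypotheses. -/

lemma tendsto_nhdsNE_of_eq_of_continuousAt {X Y : Type*} [TopologicalSpace X] [TopologicalSpace Y]
    {f g : X → Y} {a : X} (hg : ContinuousAt g a) (hfg : ∀ w ≠ a, f w = g w) :
    Tendsto f (𝓝[≠] a) (𝓝 (g a)) :=
  (hg.tendsto.mono_left nhdsWithin_le_nhds).congr' <|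
    eventually_nhdsWithin_of_forall fun w hw => (hfg w hw).symm

lemma Matrix.exists_tendsto_det {α R n : Type*} [Fintype n] [DecidableEq n] [CommRing R]
    [TopologicalSpace R] [IsTopologicalRing R] {M : α → Matrix n n R} {l : Filter α}
    (h : ∀ i j, ∃ L, Tendsto (fun w => M w i j) l (𝓝 L)) :
    ∃ L, Tendsto (fun w => (M w).det) l (𝓝 L) := by
  choose L hL using h
  exact ⟨(Matrix.of L).det, (continuous_id.matrix_det.tendsto _).comp
    (tendsto_pi_nhds.2 fun i => tendsto_pi_nhds.2 fun j => hL i j)⟩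

lemma continuousAt_gf {c a : ℂ} {f g : ℂ → ℂ} (hf : ContinuousAt f a) (hg : ContinuousAt g a)
    (hfg : f a ≠ g a) : ContinuousAt (fun w => gf c (f w) (g w)) a :=
  continuousAt_const.div (hf.sub hg) (sub_ne_zero.mpr hfg)

lemma continuousAt_tf {c a b : ℂ} {f : ℂ → ℂ} (hf : ContinuousAt f a) (h₀ : f a - b ≠ 0)
    (h₁ : f a - b + c ≠ 0) : ContinuousAt (fun w => tf c (f w) b) a :=
  continuousAt_const.div (by fun_prop) (mul_ne_zero h₀ h₁)

lemma hf_sub_shift (c w b : ℂ) : hf c (w - c) b = (w - b) / c := by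
  rw [hf]; ring_nf

lemma tendsto_sub_mul_tf_self {c : ℂ} (hc : c ≠ 0) (b : ℂ) :
    Tendsto (fun w => (w - b) * tf c w b) (𝓝[≠] b) (𝓝 c) := by
  have hg : ContinuousAt (fun w => c ^ 2 / (w - b + c)) b :=
    continuousAt_const.div (by fun_prop) (by simpa using hc)
  have key := tendsto_nhdsNE_of_eq_of_continuousAt hg fun w hw => by
    have : w - b ≠ 0 := sub_ne_zero.mpr hw
    show (w - b) * tf c w b = _
    rw [tf]; field_simp
  simpa [sq, hc] using key

lemma tendsto_sub_mul_tf_sub_shift {c : ℂ} (hc : c ≠ 0) (b : ℂ) :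
    Tendsto (fun w => (w - b) * tf c (w - c) b) (𝓝[≠] b) (𝓝 (-c)) := by
  have hg : ContinuousAt (fun w => c ^ 2 / (w - c - b)) b :=
    continuousAt_const.div (by fun_prop) (by simpa using hc)
  have key := tendsto_nhdsNE_of_eq_of_continuousAt hg fun w hw => by
    have : w - b ≠ 0 := sub_ne_zero.mpr hw
    show (w - b) * tf c (w - c) b = _
    rw [tf, show w - c - b + c = w - b by ring]; field_simp
  simpa [sq, hc, div_neg] using key

lemma continuousAt_prod_gf {c a : ℂ} {n : ℕ} {x : ℂ → Fin n → ℂ} (hx : ContinuousAt x a)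
    (hinj : Function.Injective (x a)) :
    ContinuousAt (fun w => ∏ j, ∏ l ∈ univ.filter (fun l => l < j), gf c (x w j) (x w l)) a :=
  tendsto_finsetProd _ fun j _ => tendsto_finsetProd _ fun l hl =>
    continuousAt_gf (continuousAt_apply j _ |>.comp hx) (continuousAt_apply l _ |>.comp hx)
      (hinj.ne (mem_filter.mp hl).2.ne')

noncomputable def columnScaledT (c : ℂ) {n : ℕ} (x y : Fin n → ℂ) : Matrix (Fin n) (Fin n) ℂ :=
  Matrix.of fun j l => (∏ i, hf c (x i) (y l)) * tf c (x j) (y l)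

lemma K_eq_mul_det_columnScaledT (c : ℂ) {n : ℕ} (x y : Fin n → ℂ) :
    K c n x y = (∏ j, ∏ k ∈ univ.filter (fun k => k < j), gf c (x j) (x k)) *
      (∏ j, ∏ k ∈ univ.filter (fun k => j < k), gf c (y j) (y k)) *
      (columnScaledT c x y).det := by
  -- despite its name, `Matrix.det_mul_row` scales the columns
  have hdet := Matrix.det_mul_row (fun l => ∏ i, hf c (x i) (y l)) (.of fun j l => tf c (x j) (y l))
  simp only [Matrix.of_apply] at hdet
  rw [K, columnScaledT, hdet, Finset.prod_comm (f := fun j l => hf c (x j) (y l)),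
    mul_assoc _ _ (Matrix.det _)]

lemma continuousAt_columnScaledT_apply {c a : ℂ} {n : ℕ} {x : ℂ → Fin n → ℂ}
    (hx : ContinuousAt x a) (y : Fin n → ℂ) {j l : Fin n} (h₀ : x a j - y l ≠ 0)
    (h₁ : x a j - y l + c ≠ 0) : ContinuousAt (fun w => columnScaledT c (x w) y j l) a := by
  have hxj : ContinuousAt (fun w => x w j) a := continuousAt_apply j _ |>.comp hx
  refine ContinuousAt.mul ?_ (continuousAt_tf hxj h₀ h₁)
  exact tendsto_finsetProd _ fun i _ => by
    unfold hf
    exact ((continuousAt_apply i _ |>.comp hx).sub continuousAt_const).add continuousAt_const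
      |>.div_const c

noncomputable def shiftedCons (c : ℂ) {m : ℕ} (xr : Fin m → ℂ) (w : ℂ) : Fin (m + 2) → ℂ :=
  Fin.cons w (Fin.cons (w - c) xr)

section shiftedCons

variable {c : ℂ} {m : ℕ} {xr : Fin m → ℂ}

lemma continuous_shiftedCons : Continuous (shiftedCons c xr) :=
  Continuous.finCons (A := fun _ => ℂ) continuous_id <|
    Continuous.finCons (A := fun _ => ℂ) (continuous_id.sub continuous_const) continuous_const

lemma shiftedCons_injective (hc : c ≠ 0) (hxr : Function.Injective xr) {w : ℂ}
    (hw : ∀ i, xr i ≠ w ∧ xr i ≠ w - c) : Function.Injective (shiftedCons c xr w) := by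
  refine Fin.cons_injective_iff.2 ⟨?_, Fin.cons_injective_iff.2 ⟨?_, hxr⟩⟩
  · rintro ⟨j, hj⟩
    cases j using Fin.cases with
    | zero => exact hc (by simpa using hj)
    | succ i => exact (hw i).1 (by simpa using hj)
  · rintro ⟨i, hi⟩
    exact (hw i).2 hi

lemma exists_tendsto_sub_mul_tf_shiftedCons (hc : c ≠ 0) {b : ℂ}
    (hb : ∀ i, xr i ≠ b ∧ xr i ≠ b - c) (j : Fin (m + 2)) :
    ∃ L, Tendsto (fun w => (w - b) * tf c (shiftedCons c xr w j) b) (𝓝[≠] b) (𝓝 L) := by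
  cases j using Fin.cases with
  | zero => exact ⟨c, tendsto_sub_mul_tf_self hc b⟩
  | succ j =>
    cases j using Fin.cases with
    | zero => exact ⟨-c, tendsto_sub_mul_tf_sub_shift hc b⟩
    | succ i =>
      have hxi : ContinuousAt (fun w => (w - b) * tf c (xr i) b) b :=
        (continuousAt_id.sub continuousAt_const).mul <| continuousAt_tf continuousAt_const
          (sub_ne_zero.2 (hb i).1) fun h => (hb i).2 (by linear_combination h)
      exact ⟨_, hxi.tendsto.mono_left nhdsWithin_le_nhds⟩

lemma columnScaledT_shiftedCons_apply_self (y : Fin (m + 2) → ℂ) (w : ℂ) (j k : Fin (m + 2)) :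
    columnScaledT c (shiftedCons c xr w) y j k =
      hf c w (y k) * (∏ i, hf c (xr i) (y k)) / c *
        ((w - y k) * tf c (shiftedCons c xr w j) (y k)) := by
  simp only [columnScaledT, Matrix.of_apply, Fin.prod_univ_succ, shiftedCons, Fin.cons_zero,
    Fin.cons_succ, hf_sub_shift]
  ring

lemma exists_tendsto_columnScaledT_shiftedCons_self (hc : c ≠ 0) (y : Fin (m + 2) → ℂ)
    {k : Fin (m + 2)} (hk : ∀ i, xr i ≠ y k ∧ xr i ≠ y k - c) (j : Fin (m + 2)) :
    ∃ L, Tendsto (fun w => columnScaledT c (shiftedCons c xr w) y j k) (𝓝[≠] (y k)) (𝓝 L) := by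
  obtain ⟨L, hL⟩ := exists_tendsto_sub_mul_tf_shiftedCons hc hk j
  have hpre : ContinuousAt (fun w => hf c w (y k) * (∏ i, hf c (xr i) (y k)) / c) (y k) := by
    unfold hf; fun_prop
  simp only [columnScaledT_shiftedCons_apply_self]
  exact ⟨_, (hpre.tendsto.mono_left nhdsWithin_le_nhds).mul hL⟩

lemma continuousAt_columnScaledT_shiftedCons {b : ℂ} (y : Fin (m + 2) → ℂ) {l : Fin (m + 2)}
    (hl : y l ≠ b) (hlc : y l ≠ b + c) (hlc' : b ≠ y l + c)
    (hxr : ∀ i, xr i ≠ y l ∧ xr i ≠ y l - c) (j : Fin (m + 2)) :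
    ContinuousAt (fun w => columnScaledT c (shiftedCons c xr w) y j l) b := by
  have h₀ : ∀ j, shiftedCons c xr b j - y l ≠ 0 := by
    simp only [Fin.forall_fin_succ, shiftedCons, Fin.cons_zero, Fin.cons_succ]
    exact ⟨sub_ne_zero.2 hl.symm, fun h => hlc' (by linear_combination h),
      fun i => sub_ne_zero.2 (hxr i).1⟩
  have h₁ : ∀ j, shiftedCons c xr b j - y l + c ≠ 0 := by
    simp only [Fin.forall_fin_succ, shiftedCons, Fin.cons_zero, Fin.cons_succ]
    exact ⟨fun h => hlc (by linear_combination -h), fun h => hl (by linear_combination -h),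
      fun i h => (hxr i).2 (by linear_combination h)⟩
  exact continuousAt_columnScaledT_apply continuous_shiftedCons.continuousAt y (h₀ j) (h₁ j)

end shiftedCons

theorem stmt14_general (c : ℂ) (hc : c ≠ 0) (m : ℕ) (xr : Fin m → ℂ) (y : Fin (m + 2) → ℂ)
    (hy : Function.Injective y) (hyc : ∀ k l, y k ≠ y l + c)
    (hxr : ∀ j k, xr j ≠ y k ∧ xr j ≠ y k - c)
    (hxrd : Function.Injective xr)
    (k : Fin (m + 2)) :
    ∃ L : ℂ,
      Tendsto (fun w => K c (m + 2) (Fin.cons w (Fin.cons (w - c) xr)) y)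
        (𝓝[≠] (y k)) (𝓝 L) := by
  change ∃ L, Tendsto (fun w => K c (m + 2) (shiftedCons c xr w) y) _ _
  simp only [K_eq_mul_det_columnScaledT]
  have hx : ContinuousAt (fun w => ∏ j, ∏ l ∈ univ.filter (fun l => l < j),
      gf c (shiftedCons c xr w j) (shiftedCons c xr w l)) (y k) :=
    continuousAt_prod_gf continuous_shiftedCons.continuousAt
      (shiftedCons_injective hc hxrd fun i => hxr i k)
  obtain ⟨L, hL⟩ := Matrix.exists_tendsto_det (M := fun w => columnScaledT c (shiftedCons c xr w) y)
    (l := 𝓝[≠] (y k)) fun j l => by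
      by_cases hlk : l = k
      · subst hlk
        exact exists_tendsto_columnScaledT_shiftedCons_self hc y (fun i => hxr i l) j
      · exact ⟨_, (continuousAt_columnScaledT_shiftedCons y (hy.ne hlk) (hyc l k) (hyc k l)
          (fun i => hxr i l) j).tendsto.mono_left nhdsWithin_le_nhds⟩
  exact ⟨_, ((hx.tendsto.mono_left nhdsWithin_le_nhds).mul tendsto_const_nhds).mul hL⟩

theorem stmt14 (c : ℂ) (hc : c ≠ 0) (m : ℕ) (xr : Fin m → ℂ) (y : Fin (m + 2) → ℂ)
    (hy : Function.Injective y) (hyc : ∀ k l, y k ≠ y l + c)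
    (hxr : ∀ j k, xr j ≠ y k ∧ xr j ≠ y k - c)
    (hxrd : Function.Injective xr)
    (hxrc : ∀ j k, j ≠ k → xr j - xr k ≠ c)
    (k : Fin (m + 2)) :
    ∃ L : ℂ,
      Tendsto (fun w => K c (m + 2) (Fin.cons w (Fin.cons (w - c) xr)) y)
        (𝓝[≠] (y k)) (𝓝 L) :=
  stmt14_general c hc m xr y hy hyc hxr hxrd k
end

section
/- Identity relating K_a with shifted arguments: for a set w̄ = w̄_I ∪ w̄_II partitioned with #w̄_I = b, #w̄_II = a, where w̄_I = s̄_I ∪ (x̄_II + 0) and w̄_II = s̄_II ∪ x̄_I with #s̄_II = #x̄_II = k, one has (-1)^a K_a(w̄_II - c | x̄) = (-1)^k K_k(s̄_II - c | x̄_II) = (-1)^b K_b(s̄ - c | w̄_I), where the sets are s̄ = s̄_I ∪ s̄_II (size b) and x̄ = x̄_I ∪ x̄_II (size a), and K_m(ū - c | v̄) means K_m evaluated with each u shifted by -c. -/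
/-! Write `w = (a, s)` and `y = (a, x)`. In `K_{q+k}(w - c + ε | y)` each matched pair
`(a_i - c + ε, a_i)` contributes a factor `h = ε / c` that vanishes and a diagonal entry of the
`t`-matrix that blows up like `1 / ε`. Moving each `ε / c` into the corresponding row of the
`t`-matrix yields an expression continuous at `ε = 0`. There the rescaled rows become `-1` on the
diagonal and `0` elsewhere, so the determinant is `(-1)^q` times the `t`-determinant of
`(s - c | x)`, while every `g`-factor involving some `a_i` cancels against the `h`-factor of the
same pair since `g(u, v) h(u - c, v) = 1`. Hence
`(-1)^(q+k) K_{q+k}(w - c + ε | y) → (-1)^k K_k(s - c | x)`; the two identities are the cases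
`a = x_I` and `a = s_I`, the genericity of the smaller families being inherited from that of `u`. -/

open Finset Filter Topology

section Scalar

variable {c : ℂ}

lemma gf_congr_sub {x y x' y' : ℂ} (h : x' - y' = x - y) : gf c x' y' = gf c x y := by
  rw [gf, gf, h]

lemma gf_mul_hf_sub (hc : c ≠ 0) {x y : ℂ} (h : x ≠ y) : gf c x y * hf c (x - c) y = 1 := by
  have : x - y ≠ 0 := sub_ne_zero.2 h
  rw [gf, hf, show x - c - y + c = x - y by ring]
  field_simp

lemma hf_shift_self (x ε : ℂ) : hf c (x - c + ε) x = ε / c := by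
  rw [hf]; ring_nf

lemma div_mul_tf_shift_self (hc : c ≠ 0) {ε : ℂ} (hε : ε ≠ 0) (x : ℂ) :
    ε / c * tf c (x - c + ε) x = c / (ε - c) := by
  rw [tf, show x - c + ε - x = ε - c by ring, sub_add_cancel]
  rcases eq_or_ne ε c with rfl | hεc
  · simp
  · have : ε - c ≠ 0 := sub_ne_zero.2 hεc
    field_simp

lemma continuousAt_tf_shift {x y : ℂ} (hxy : x ≠ y) (hxyc : x - y ≠ c) :
    ContinuousAt (fun ε => tf c (x - c + ε) y) 0 := by
  refine continuousAt_const.div (by fun_prop) (mul_ne_zero ?_ ?_)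
  · rwa [add_zero, sub_right_comm, sub_ne_zero]
  · rwa [add_zero, sub_right_comm, sub_add_cancel, sub_ne_zero]

lemma prod_gf_mul_prod_hf_sub (hc : c ≠ 0) {ι κ : Type*} [Fintype ι] [Fintype κ]
    {u : ι → ℂ} {v : κ → ℂ} (h : ∀ i j, u i ≠ v j) :
    (∏ i, ∏ j, gf c (u i) (v j)) * ∏ i, ∏ j, hf c (u i - c) (v j) = 1 := by
  rw [← prod_mul_distrib]
  refine prod_eq_one fun i _ => ?_
  rw [← prod_mul_distrib]
  exact prod_eq_one fun j _ => gf_mul_hf_sub hc (h i j)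

end Scalar

def Separated (c u v : ℂ) : Prop := u ≠ v ∧ u - v ≠ c ∧ v - u ≠ c

lemma Separated.symm {c u v : ℂ} (h : Separated c u v) : Separated c v u :=
  ⟨h.1.symm, h.2.2, h.2.1⟩

lemma pairwise_separated_ofFn {c : ℂ} {n : ℕ} {u : Fin n → ℂ}
    (hu : ∀ i j, i ≠ j → u i ≠ u j ∧ u i - u j ≠ c) :
    (List.ofFn u).Pairwise (Separated c) :=
  List.pairwise_ofFn.2 fun i j hij =>
    ⟨(hu i j hij.ne).1, (hu i j hij.ne).2, (hu j i hij.ne').2⟩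

lemma separated_of_pairwise_append {c : ℂ} {q k : ℕ} {a : Fin q → ℂ} {s x : Fin k → ℂ}
    (h : (List.ofFn a ++ List.ofFn s ++ List.ofFn x).Pairwise (Separated c)) :
    (∀ i i', i ≠ i' → Separated c (a i) (a i')) ∧ (∀ i j, Separated c (a i) (x j)) ∧
      (∀ j i, Separated c (s j) (a i)) ∧ ∀ j j', Separated c (s j) (x j') := by
  simp only [List.pairwise_append, List.pairwise_ofFn, List.mem_append, List.mem_ofFn,
    forall_exists_index, forall_apply_eq_imp_iff, or_imp, forall_and] at h
  obtain ⟨⟨haa, -, has⟩, -, hax, hsx⟩ := h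
  refine ⟨fun i i' hii' => ?_, hax, fun j i => (has i j).symm, hsx⟩
  rcases hii'.lt_or_gt with hlt | hgt
  · exact haa hlt
  · exact (haa hgt).symm

section Products

variable {M α : Type*} [CommMonoid M] {q k : ℕ}

theorem prod_prod_filter_lt_append (f : α → α → M) (u : Fin q → α) (v : Fin k → α) :
    ∏ j, ∏ m ∈ univ.filter (· < j), f (Fin.append u v j) (Fin.append u v m) =
      (∏ j, ∏ m ∈ univ.filter (· < j), f (u j) (u m)) * (∏ j, ∏ i, f (v j) (u i)) *
        ∏ j, ∏ m ∈ univ.filter (· < j), f (v j) (v m) := by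
  have hcast (i j : Fin q) : Fin.castAdd k i < Fin.castAdd k j ↔ i < j := Iff.rfl
  have hcross (i : Fin q) (j : Fin k) : Fin.castAdd k i < Fin.natAdd q j := by
    simp only [Fin.lt_def, Fin.val_castAdd, Fin.val_natAdd]; omega
  simp [prod_filter, Fin.prod_univ_add, hcast, Fin.natAdd_lt_natAdd_iff, hcross,
    (hcross _ _).not_gt, prod_mul_distrib]

theorem prod_prod_filter_gt_append (f : α → α → M) (u : Fin q → α) (v : Fin k → α) :
    ∏ j, ∏ m ∈ univ.filter (j < ·), f (Fin.append u v j) (Fin.append u v m) =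
      (∏ j, ∏ m ∈ univ.filter (j < ·), f (u j) (u m)) * (∏ i, ∏ j, f (u i) (v j)) *
        ∏ j, ∏ m ∈ univ.filter (j < ·), f (v j) (v m) := by
  have hcast (i j : Fin q) : Fin.castAdd k i < Fin.castAdd k j ↔ i < j := Iff.rfl
  have hcross (i : Fin q) (j : Fin k) : Fin.castAdd k i < Fin.natAdd q j := by
    simp only [Fin.lt_def, Fin.val_castAdd, Fin.val_natAdd]; omega
  simp [prod_filter, Fin.prod_univ_add, hcast, Fin.natAdd_lt_natAdd_iff, hcross,
    (hcross _ _).not_gt, prod_mul_distrib, mul_assoc]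

theorem prod_prod_filter_lt_mul_prod_prod_filter_gt {ι : Type*} [Fintype ι] [LinearOrder ι]
    (f : ι → ι → M) :
    (∏ j, ∏ m ∈ univ.filter (· < j), f j m) * ∏ j, ∏ m ∈ univ.filter (j < ·), f j m =
      ∏ j, ∏ m ∈ univ.erase j, f j m := by
  rw [← prod_mul_distrib]
  refine prod_congr rfl fun j _ => ?_
  rw [← prod_union (disjoint_filter.2 fun m _ h h' => lt_asymm h h')]
  congr 1
  ext m
  simp

end Products

section GProd

variable {n q k : ℕ}

noncomputable def gProdLower (c : ℂ) (x : Fin n → ℂ) : ℂ :=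
  ∏ j : Fin n, ∏ k ∈ univ.filter (fun k => k < j), gf c (x j) (x k)

noncomputable def gProdUpper (c : ℂ) (y : Fin n → ℂ) : ℂ :=
  ∏ j : Fin n, ∏ k ∈ univ.filter (fun k => j < k), gf c (y j) (y k)

variable {c : ℂ}

lemma K_eq (x y : Fin n → ℂ) :
    K c n x y = gProdLower c x * gProdUpper c y * (∏ j, ∏ k, hf c (x j) (y k)) *
      (Matrix.of fun j k => tf c (x j) (y k)).det :=
  rfl

lemma gProdLower_congr_sub {x x' : Fin n → ℂ} (h : ∀ i j, x' i - x' j = x i - x j) :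
    gProdLower c x' = gProdLower c x :=
  prod_congr rfl fun j _ => prod_congr rfl fun m _ => gf_congr_sub (h j m)

lemma gProdLower_append (u : Fin q → ℂ) (v : Fin k → ℂ) :
    gProdLower c (Fin.append u v) =
      gProdLower c u * (∏ j, ∏ i, gf c (v j) (u i)) * gProdLower c v :=
  prod_prod_filter_lt_append (gf c) u v

lemma gProdUpper_append (u : Fin q → ℂ) (v : Fin k → ℂ) :
    gProdUpper c (Fin.append u v) =
      gProdUpper c u * (∏ i, ∏ j, gf c (u i) (v j)) * gProdUpper c v :=
  prod_prod_filter_gt_append (gf c) u v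

lemma gProdLower_mul_gProdUpper_mul_prod_hf_sub (hc : c ≠ 0) {x : Fin n → ℂ}
    (hx : Function.Injective x) :
    gProdLower c x * gProdUpper c x * ∏ i, ∏ j ∈ univ.erase i, hf c (x i - c) (x j) = 1 := by
  rw [gProdLower, gProdUpper,
    prod_prod_filter_lt_mul_prod_prod_filter_gt (fun i j => gf c (x i) (x j)), ← prod_mul_distrib]
  refine prod_eq_one fun i _ => ?_
  rw [← prod_mul_distrib]
  exact prod_eq_one fun j hj => gf_mul_hf_sub hc (hx.ne (ne_of_mem_erase hj).symm)

end GProd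

section Matched

variable (c : ℂ) {q k : ℕ} (a : Fin q → ℂ) (s x : Fin k → ℂ)

noncomputable def reducedHProd (ε : ℂ) : ℂ :=
  (∏ i, ∏ i' ∈ univ.erase i, hf c (a i - c + ε) (a i')) *
    (∏ i, ∏ j, hf c (a i - c + ε) (x j)) * (∏ j, ∏ i, hf c (s j - c + ε) (a i)) *
    ∏ j, ∏ j', hf c (s j - c + ε) (x j')

/- The `t`-matrix of `(a, s) - c + ε` against `(a, x)` with the rows of `a` multiplied by
`ε / c`; on the diagonal this product is simplified to `c / (ε - c)`, which keeps it continuous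
at `ε = 0`. -/
noncomputable def rescaledTMatrix (ε : ℂ) : Matrix (Fin q ⊕ Fin k) (Fin q ⊕ Fin k) ℂ :=
  Matrix.fromBlocks
    (Matrix.of fun i i' => if i = i' then c / (ε - c) else ε / c * tf c (a i - c + ε) (a i'))
    (Matrix.of fun i j => ε / c * tf c (a i - c + ε) (x j))
    (Matrix.of fun j i => tf c (s j - c + ε) (a i))
    (Matrix.of fun j j' => tf c (s j - c + ε) (x j'))

variable {c a s x}

lemma prod_prod_hf_shift_append (ε : ℂ) :
    ∏ j, ∏ m, hf c (Fin.append a s j - c + ε) (Fin.append a x m) =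
      (ε / c) ^ q * reducedHProd c a s x ε := by
  have hdiag (i : Fin q) : ∏ i', hf c (a i - c + ε) (a i') =
      ε / c * ∏ i' ∈ univ.erase i, hf c (a i - c + ε) (a i') := by
    rw [← hf_shift_self (a i) ε]
    exact (mul_prod_erase univ (fun i' => hf c (a i - c + ε) (a i')) (mem_univ i)).symm
  simp only [Fin.prod_univ_add, Fin.append_left, Fin.append_right, hdiag, prod_mul_distrib,
    prod_const, card_univ, Fintype.card_fin, reducedHProd]
  ring

lemma det_rescaledTMatrix (hc : c ≠ 0) {ε : ℂ} (hε : ε ≠ 0) :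
    (rescaledTMatrix c a s x ε).det = (ε / c) ^ q *
      (Matrix.of fun j m => tf c (Fin.append a s j - c + ε) (Fin.append a x m)).det := by
  set T := Matrix.of fun j m => tf c (Fin.append a s j - c + ε) (Fin.append a x m)
  have hT : rescaledTMatrix c a s x ε = Matrix.of fun r r' => Sum.elim (fun _ => ε / c) 1 r *
      T.submatrix finSumFinEquiv finSumFinEquiv r r' := by
    ext (i | j) (i' | j') <;> simp [rescaledTMatrix, T]
    rintro rfl
    exact (div_mul_tf_shift_self hc hε _).symm
  rw [hT, Matrix.det_mul_column, Fintype.prod_sum_type, Matrix.det_submatrix_equiv_self]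
  simp [div_pow]

lemma det_rescaledTMatrix_zero (hc : c ≠ 0) :
    (rescaledTMatrix c a s x 0).det =
      (-1) ^ q * (Matrix.of fun j j' => tf c (s j - c) (x j')).det := by
  have h0 : rescaledTMatrix c a s x 0 = Matrix.fromBlocks (Matrix.diagonal fun _ => -1) 0
      (Matrix.of fun j i => tf c (s j - c + 0) (a i))
      (Matrix.of fun j j' => tf c (s j - c) (x j')) := by
    ext (i | j) (i' | j') <;> simp [rescaledTMatrix, Matrix.diagonal_apply, hc]
  rw [h0, Matrix.det_fromBlocks_zero₁₂, Matrix.det_diagonal]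
  simp

lemma continuous_reducedHProd : Continuous (reducedHProd c a s x) := by
  unfold reducedHProd hf
  fun_prop

lemma continuousAt_rescaledTMatrix (hc : c ≠ 0)
    (haa : ∀ i i', i ≠ i' → Separated c (a i) (a i')) (hax : ∀ i j, Separated c (a i) (x j))
    (hsa : ∀ j i, Separated c (s j) (a i))
    (hsx : ∀ j j', Separated c (s j) (x j')) : ContinuousAt (rescaledTMatrix c a s x) 0 := by
  refine continuousAt_pi.2 fun r => continuousAt_pi.2 fun r' => ?_
  rcases r with i | j <;> rcases r' with i' | j' <;>
    simp only [rescaledTMatrix, Matrix.fromBlocks_apply₁₁, Matrix.fromBlocks_apply₁₂,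
      Matrix.fromBlocks_apply₂₁, Matrix.fromBlocks_apply₂₂, Matrix.of_apply]
  · by_cases h : i = i'
    · simp only [h, if_true]
      exact continuousAt_const.div (by fun_prop) (by simpa using hc)
    · simp only [h, if_false]
      exact (continuousAt_id.div_const c).mul
        (continuousAt_tf_shift (haa i i' h).1 (haa i i' h).2.1)
  · exact (continuousAt_id.div_const c).mul (continuousAt_tf_shift (hax i j').1 (hax i j').2.1)
  · exact continuousAt_tf_shift (hsa j i').1 (hsa j i').2.1
  · exact continuousAt_tf_shift (hsx j j').1 (hsx j j').2.1

lemma K_shift_append (hc : c ≠ 0) {ε : ℂ} (hε : ε ≠ 0) :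
    K c (q + k) (fun j => Fin.append a s j - c + ε) (Fin.append a x) =
      gProdLower c (Fin.append a s) * gProdUpper c (Fin.append a x) * reducedHProd c a s x ε *
        (rescaledTMatrix c a s x ε).det := by
  rw [K_eq, gProdLower_congr_sub (x := Fin.append a s) fun i j => by ring,
    prod_prod_hf_shift_append, det_rescaledTMatrix hc hε]
  ring

lemma gProd_mul_reducedHProd_zero (hc : c ≠ 0) (ha : Function.Injective a)
    (hax : ∀ i j, a i ≠ x j) (hsa : ∀ j i, s j ≠ a i) :
    gProdLower c (Fin.append a s) * gProdUpper c (Fin.append a x) * reducedHProd c a s x 0 =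
      gProdLower c s * gProdUpper c x * ∏ j, ∏ j', hf c (s j - c) (x j') := by
  rw [gProdLower_append, gProdUpper_append, reducedHProd]
  simp only [add_zero]
  calc _ = (gProdLower c a * gProdUpper c a *
          ∏ i, ∏ i' ∈ univ.erase i, hf c (a i - c) (a i')) *
        ((∏ i, ∏ j, gf c (a i) (x j)) * ∏ i, ∏ j, hf c (a i - c) (x j)) *
        ((∏ j, ∏ i, gf c (s j) (a i)) * ∏ j, ∏ i, hf c (s j - c) (a i)) *
        (gProdLower c s * gProdUpper c x * ∏ j, ∏ j', hf c (s j - c) (x j')) := by ring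
    _ = _ := by
      rw [gProdLower_mul_gProdUpper_mul_prod_hf_sub hc ha, prod_gf_mul_prod_hf_sub hc hax,
        prod_gf_mul_prod_hf_sub hc hsa, one_mul, one_mul, one_mul]

theorem tendsto_K_shift_append (hc : c ≠ 0)
    (hgen : (List.ofFn a ++ List.ofFn s ++ List.ofFn x).Pairwise (Separated c)) :
    Tendsto (fun ε => (-1 : ℂ) ^ (q + k) *
        K c (q + k) (fun j => Fin.append a s j - c + ε) (Fin.append a x))
      (𝓝[≠] 0) (𝓝 ((-1 : ℂ) ^ k * K c k (fun j => s j - c) x)) := by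
  obtain ⟨haa, hax, hsa, hsx⟩ := separated_of_pairwise_append hgen
  set R := fun ε => gProdLower c (Fin.append a s) * gProdUpper c (Fin.append a x) *
    reducedHProd c a s x ε * (rescaledTMatrix c a s x ε).det
  have hR : ContinuousAt R 0 :=
    (continuousAt_const.mul continuous_reducedHProd.continuousAt).mul
      (continuous_id.matrix_det.continuousAt.comp
        (continuousAt_rescaledTMatrix hc haa hax hsa hsx))
  have hR0 : (-1) ^ (q + k) * R 0 = (-1 : ℂ) ^ k * K c k (fun j => s j - c) x := by
    have hsign : (-1 : ℂ) ^ (q + k) * (-1) ^ q = (-1) ^ k := by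
      rw [← pow_add, add_right_comm, ← two_mul, pow_add, pow_mul, neg_one_sq, one_pow, one_mul]
    have ha : Function.Injective a := fun i i' h => by_contra fun hne => (haa i i' hne).1 h
    simp only [R, gProd_mul_reducedHProd_zero hc ha (fun i j => (hax i j).1)
        (fun j i => (hsa j i).1), det_rescaledTMatrix_zero hc, K_eq,
      gProdLower_congr_sub (x := s) (x' := fun j => s j - c) fun i j => by ring]
    rw [← hsign]
    ring
  rw [← hR0]
  refine ((continuousAt_const.mul hR).tendsto.mono_left nhdsWithin_le_nhds).congr' ?_
  filter_upwards [self_mem_nhdsWithin] with ε hε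
  rw [K_shift_append hc hε]
  rfl

end Matched

theorem stmt15 (c : ℂ) (hc : c ≠ 0) (p q k : ℕ)
    (sI : Fin p → ℂ) (sII : Fin k → ℂ) (xI : Fin q → ℂ) (xII : Fin k → ℂ)
    (u : Fin ((p + k) + (q + k)) → ℂ)
    (hu : u = Fin.append (Fin.append sI sII) (Fin.append xI xII))
    (hgen : ∀ i j, i ≠ j → u i ≠ u j ∧ u i - u j ≠ c) :
    Tendsto (fun ε : ℂ => (-1 : ℂ) ^ (q + k) *
        K c (q + k) (fun i => Fin.append xI sII i - c + ε) (Fin.append xI xII))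
      (𝓝[≠] 0)
      (𝓝 ((-1 : ℂ) ^ k * K c k (fun i => sII i - c) xII)) ∧
    Tendsto (fun ε : ℂ => (-1 : ℂ) ^ (p + k) *
        K c (p + k) (fun i => Fin.append sI sII i - c + ε) (Fin.append sI xII))
      (𝓝[≠] 0)
      (𝓝 ((-1 : ℂ) ^ k * K c k (fun i => sII i - c) xII)) := by
  have hL : (List.ofFn sI ++ List.ofFn sII ++ (List.ofFn xI ++ List.ofFn xII)).Pairwise
      (Separated c) := by
    simpa [hu] using pairwise_separated_ofFn hgen
  refine ⟨tendsto_K_shift_append hc ?_, tendsto_K_shift_append hc ?_⟩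
  · refine (hL.sublist ?_).perm (List.perm_append_comm.append_right _) Separated.symm
    simp
  · exact hL.sublist ((List.sublist_append_right _ _).append_left _)
end
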